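/- arXiv:2311.07010 — 8 statements merged into one kernel-verified Lean document; each statement's English description precedes it below -/
import Mathlib

section
/- Let A be a symmetric n×n matrix with entries in {0,1}, φ a positive weight function, α ∈ ℝ, and T the degree-weighted learning matrix built from A, α and φ. If T is irreducible and aperiodic, then T^∞ = lim_{t→∞} T^t exists and every row of T^∞ equals the vector (T_1, …, T_n), where T_j = [Σ_i A_ij φ(α, d_j(A)) φ(α, d_i(A))] / [Σ_{i,j} A_ij φ(α, d_j(A)) φ(α, d_i(A))]. -/
open Filter


private lemma aux_closure_diff (S : Set ℕ)
    (hadd : ∀ a ∈ S, ∀ b ∈ S, a + b ∈ S) (x : ℤ)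
    (hx : x ∈ AddSubgroup.closure ((fun m : ℕ => (m : ℤ)) '' S)) :
    ∃ a b : ℕ, (a ∈ S ∨ a = 0) ∧ (b ∈ S ∨ b = 0) ∧ x = (a : ℤ) - b := by
  have hadd' : ∀ a : ℕ, (a ∈ S ∨ a = 0) → ∀ b : ℕ, (b ∈ S ∨ b = 0) →
      (a + b ∈ S ∨ a + b = 0) := by
    rintro a (ha | rfl) b (hb | rfl)
    · exact Or.inl (hadd a ha b hb)
    · simpa using Or.inl ha
    · simpa using Or.inl hb
    · simp
  induction hx using AddSubgroup.closure_induction with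
  | mem y hy =>
    obtain ⟨a, ha, rfl⟩ := hy
    exact ⟨a, 0, Or.inl ha, Or.inr rfl, by simp⟩
  | zero => exact ⟨0, 0, Or.inr rfl, Or.inr rfl, by simp⟩
  | add y z hy hz ihy ihz =>
    obtain ⟨a, b, ha, hb, rfl⟩ := ihy
    obtain ⟨c, d, hc, hd, rfl⟩ := ihz
    exact ⟨a + c, b + d, hadd' a ha c hc, hadd' b hb d hd, by push_cast; ring⟩
  | neg y hy ihy =>
    obtain ⟨a, b, ha, hb, rfl⟩ := ihy
    exact ⟨b, a, hb, ha, by ring⟩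

/-- An additively closed set of positive naturals whose gcd is 1 contains all
sufficiently large naturals. -/
private lemma aux_semigroup_cofinite (S : Set ℕ) (hpos : ∀ s ∈ S, 0 < s)
    (hne : S.Nonempty) (hadd : ∀ a ∈ S, ∀ b ∈ S, a + b ∈ S)
    (hgcd : ∀ k : ℕ, (∀ t ∈ S, k ∣ t) → k = 1) :
    ∃ N : ℕ, 0 < N ∧ ∀ t, N ≤ t → t ∈ S := by
  set H := AddSubgroup.closure ((fun m : ℕ => (m : ℤ)) '' S) with hH
  obtain ⟨g, hg⟩ := Int.subgroup_cyclic H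
  -- every element of S is divisible by |g|
  have hdvd : ∀ t ∈ S, g.natAbs ∣ t := by
    intro t ht
    have hmem : (t : ℤ) ∈ H := AddSubgroup.subset_closure ⟨t, ht, rfl⟩
    rw [hg, AddSubgroup.mem_closure_singleton] at hmem
    obtain ⟨m, hm⟩ := hmem
    have : g ∣ (t : ℤ) := ⟨m, by rw [← hm, smul_eq_mul]; ring⟩
    exact Int.natAbs_dvd_natAbs.mpr (by simpa using this)
  have hg1 : g.natAbs = 1 := hgcd _ hdvd
  have hone : (1 : ℤ) ∈ H := by
    rw [hg, AddSubgroup.mem_closure_singleton]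
    rcases Int.natAbs_eq g with h | h
    · exact ⟨1, by rw [h, hg1]; simp⟩
    · exact ⟨-1, by rw [h, hg1]; simp⟩
  obtain ⟨a, b, ha, hb, hab⟩ := aux_closure_diff S hadd 1 hone
  have hab' : a = b + 1 := by omega
  -- the pair (a, b) = (b+1, b) of consecutive numbers generates all large naturals
  rcases hb with hbS | rfl
  · -- b ∈ S, a = b + 1 ∈ S
    have haS : a ∈ S := by
      rcases ha with h | h
      · exact h
      · omega
    have hbpos : 0 < b := hpos b hbS
    -- all combinations x*a + y*b with x + y ≥ 1 lie in S
    have hcomb : ∀ m : ℕ, ∀ x y : ℕ, x + y = m + 1 → x * a + y * b ∈ S := by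
      intro m
      induction m with
      | zero =>
        intro x y hxy
        rcases Nat.add_eq_one_iff.mp hxy with ⟨rfl, rfl⟩ | ⟨rfl, rfl⟩
        · simpa using hbS
        · simpa using haS
      | succ m ih =>
        intro x y hxy
        rcases x with _ | x
        · -- x = 0, y = m + 2
          have hy : y = (m + 1) + 1 := by omega
          have : 0 * a + (m + 1) * b ∈ S := ih 0 (m + 1) (by omega)
          have := hadd b hbS _ this
          convert this using 1
          subst hy; ring
        · have hin : x * a + y * b ∈ S := ih x y (by omega)
          have := hadd a haS _ hin
          convert this using 1
          ring
    refine ⟨b * b, Nat.mul_pos hbpos hbpos, fun t ht => ?_⟩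
    have hq : b ≤ t / b := Nat.le_div_iff_mul_le hbpos |>.mpr (by nlinarith)
    have hr : t % b < b := Nat.mod_lt t hbpos
    set q := t / b
    set r := t % b
    have htqr : t = q * b + r := by rw [mul_comm]; exact (Nat.div_add_mod t b).symm
    have hrep : t = r * a + (q - r) * b := by
      rw [hab']
      have : r ≤ q := le_trans (le_of_lt hr) hq
      calc t = q * b + r := htqr
        _ = r * (b + 1) + (q - r) * b := by
            rw [Nat.mul_add, Nat.mul_one, Nat.sub_mul]
            have h2 : r * b ≤ q * b := Nat.mul_le_mul_right b this
            omega
    rw [hrep]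
    exact hcomb (r + (q - r) - 1) r (q - r) (by omega)
  · -- b = 0, so a = 1 ∈ S: all positive naturals are in S
    have h1 : (1 : ℕ) ∈ S := by
      rcases ha with h | h
      · rwa [hab'] at h
      · omega
    refine ⟨1, one_pos, fun t ht => ?_⟩
    induction t with
    | zero => omega
    | succ t iht =>
      rcases Nat.eq_or_lt_of_le ht with h | h
      · exact h ▸ h1
      · have := hadd 1 h1 t (iht (by omega))
        simpa [Nat.add_comm] using this
variable {n : ℕ}

private lemma aux_pow_nonneg (T : Matrix (Fin n) (Fin n) ℝ)
    (h1 : ∀ i j, 0 ≤ T i j) : ∀ t, ∀ i j, 0 ≤ (T ^ t) i j := by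
  intro t
  induction t with
  | zero =>
    intro i j
    rw [pow_zero, Matrix.one_apply]
    split <;> norm_num
  | succ t ih =>
    intro i j
    rw [pow_succ, Matrix.mul_apply]
    exact Finset.sum_nonneg fun k _ => mul_nonneg (ih i k) (h1 k j)

private lemma aux_pow_rowsum (T : Matrix (Fin n) (Fin n) ℝ)
    (h2 : ∀ i, ∑ j, T i j = 1) : ∀ t, ∀ i, ∑ j, (T ^ t) i j = 1 := by
  intro t
  induction t with
  | zero => intro i; simp [Matrix.one_apply]
  | succ t ih =>
    intro i
    simp only [pow_succ, Matrix.mul_apply]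
    rw [Finset.sum_comm]
    calc ∑ k, ∑ j, (T ^ t) i k * T k j
        = ∑ k, (T ^ t) i k * ∑ j, T k j := by
          simp [Finset.mul_sum]
      _ = 1 := by simp only [h2, mul_one]; exact ih i

private lemma aux_pow_entry_ge (T : Matrix (Fin n) (Fin n) ℝ)
    (h1 : ∀ i j, 0 ≤ T i j) (s t : ℕ) (i j : Fin n) :
    (T ^ s) i i * (T ^ t) i j ≤ (T ^ (s + t)) i j := by
  rw [pow_add, Matrix.mul_apply]
  exact Finset.single_le_sum
    (fun k _ => mul_nonneg (aux_pow_nonneg T h1 s i k) (aux_pow_nonneg T h1 t k j))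
    (Finset.mem_univ i)

/-- Core Dobrushin-type bound: a row-stochastic matrix with entries `≥ ε`
shrinks the column range. -/
private lemma aux_key_sup (hne : (Finset.univ : Finset (Fin n)).Nonempty)
    (P Q : Matrix (Fin n) (Fin n) ℝ) (ε : ℝ) (hε0 : 0 ≤ ε)
    (hε : ∀ i j, ε ≤ P i j) (hrow : ∀ i, ∑ j, P i j = 1) (j : Fin n) :
    Finset.sup' Finset.univ hne (fun i => (P * Q) i j)
      ≤ Finset.sup' Finset.univ hne (fun i => Q i j)
        - ε * (Finset.sup' Finset.univ hne (fun i => Q i j)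
               - Finset.inf' Finset.univ hne (fun i => Q i j)) := by
  set Mv := Finset.sup' Finset.univ hne (fun i => Q i j) with hMv
  set mv := Finset.inf' Finset.univ hne (fun i => Q i j) with hmv
  have hosc : 0 ≤ Mv - mv := by
    obtain ⟨i0, -⟩ := id hne
    have h1 := Finset.inf'_le (fun i => Q i j) (Finset.mem_univ i0)
    have h2 := Finset.le_sup' (f := fun i => Q i j) (Finset.mem_univ i0)
    simp only [← hMv, ← hmv] at *
    linarith
  obtain ⟨k0, _, hk0⟩ := Finset.exists_mem_eq_inf' hne (fun i => Q i j)
  refine Finset.sup'_le hne _ fun i _ => ?_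
  have hPnn : ∀ k, 0 ≤ P i k := fun k => le_trans hε0 (hε i k)
  have hsplit : (P * Q) i j = (∑ k, P i k * (Q k j - mv)) + mv := by
    rw [Matrix.mul_apply]
    have : ∑ k, P i k * (Q k j - mv) = (∑ k, P i k * Q k j) - (∑ k, P i k) * mv := by
      rw [Finset.sum_mul, ← Finset.sum_sub_distrib]
      exact Finset.sum_congr rfl fun k _ => by ring
    rw [this, hrow i]
    ring
  have hbound : ∑ k, P i k * (Q k j - mv) ≤ (1 - ε) * (Mv - mv) := by
    have hk0' : P i k0 * (Q k0 j - mv) = 0 := by rw [← hk0]; ring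
    rw [← Finset.sum_erase_add _ _ (Finset.mem_univ k0), hk0', add_zero]
    calc ∑ k ∈ Finset.univ.erase k0, P i k * (Q k j - mv)
        ≤ ∑ k ∈ Finset.univ.erase k0, P i k * (Mv - mv) := by
          refine Finset.sum_le_sum fun k _ => ?_
          refine mul_le_mul_of_nonneg_left ?_ (hPnn k)
          have h1 := Finset.inf'_le (fun i => Q i j) (Finset.mem_univ k)
          have h2 := Finset.le_sup' (f := fun i => Q i j) (Finset.mem_univ k)
          simp only [← hMv, ← hmv] at *
          linarith
      _ = (∑ k ∈ Finset.univ.erase k0, P i k) * (Mv - mv) := by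
          rw [Finset.sum_mul]
      _ = (1 - P i k0) * (Mv - mv) := by
          have : (∑ k ∈ Finset.univ.erase k0, P i k) + P i k0 = 1 := by
            rw [Finset.sum_erase_add _ _ (Finset.mem_univ k0)]; exact hrow i
          rw [show (∑ k ∈ Finset.univ.erase k0, P i k) = 1 - P i k0 by linarith]
      _ ≤ (1 - ε) * (Mv - mv) := by
          have := hε i k0
          nlinarith
  have := hsplit ▸ (add_le_add hbound (le_refl mv))
  -- (P*Q) i j ≤ (1-ε)(Mv-mv) + mv = Mv - ε (Mv - mv)
  linarith

private lemma aux_key_inf (hne : (Finset.univ : Finset (Fin n)).Nonempty)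
    (P Q : Matrix (Fin n) (Fin n) ℝ) (ε : ℝ) (hε0 : 0 ≤ ε)
    (hε : ∀ i j, ε ≤ P i j) (hrow : ∀ i, ∑ j, P i j = 1) (j : Fin n) :
    Finset.inf' Finset.univ hne (fun i => Q i j)
        + ε * (Finset.sup' Finset.univ hne (fun i => Q i j)
               - Finset.inf' Finset.univ hne (fun i => Q i j))
      ≤ Finset.inf' Finset.univ hne (fun i => (P * Q) i j) := by
  set Mv := Finset.sup' Finset.univ hne (fun i => Q i j) with hMv
  set mv := Finset.inf' Finset.univ hne (fun i => Q i j) with hmv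
  obtain ⟨k1, -, hk1⟩ := Finset.exists_mem_eq_sup' hne (fun i => Q i j)
  refine Finset.le_inf' hne _ fun i _ => ?_
  have hPnn : ∀ k, 0 ≤ P i k := fun k => le_trans hε0 (hε i k)
  have hsplit : (P * Q) i j = (∑ k, P i k * (Q k j - Mv)) + Mv := by
    rw [Matrix.mul_apply]
    have : ∑ k, P i k * (Q k j - Mv) = (∑ k, P i k * Q k j) - (∑ k, P i k) * Mv := by
      rw [Finset.sum_mul, ← Finset.sum_sub_distrib]
      exact Finset.sum_congr rfl fun k _ => by ring
    rw [this, hrow i]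
    ring
  have hbound : (1 - ε) * (mv - Mv) ≤ ∑ k, P i k * (Q k j - Mv) := by
    have hk1' : P i k1 * (Q k1 j - Mv) = 0 := by rw [← hk1]; ring
    rw [← Finset.sum_erase_add _ _ (Finset.mem_univ k1), hk1', add_zero]
    have hstep : ∀ k ∈ Finset.univ.erase k1, P i k * (mv - Mv) ≤ P i k * (Q k j - Mv) := by
      intro k _
      refine mul_le_mul_of_nonneg_left ?_ (hPnn k)
      have h1 := Finset.inf'_le (fun i => Q i j) (Finset.mem_univ k)
      simp only [← hmv] at *
      linarith
    calc (1 - ε) * (mv - Mv)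
        ≤ (1 - P i k1) * (mv - Mv) := by
          have h1 := hε i k1
          have h2 : mv ≤ Mv := by
            obtain ⟨i0, -⟩ := id hne
            have ha := Finset.inf'_le (fun i => Q i j) (Finset.mem_univ i0)
            have hb := Finset.le_sup' (f := fun i => Q i j) (Finset.mem_univ i0)
            simp only [← hMv, ← hmv] at *
            linarith
          nlinarith
      _ = (∑ k ∈ Finset.univ.erase k1, P i k) * (mv - Mv) := by
          have : (∑ k ∈ Finset.univ.erase k1, P i k) + P i k1 = 1 := by
            rw [Finset.sum_erase_add _ _ (Finset.mem_univ k1)]; exact hrow i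
          rw [show (∑ k ∈ Finset.univ.erase k1, P i k) = 1 - P i k1 by linarith]
      _ ≤ ∑ k ∈ Finset.univ.erase k1, P i k * (Q k j - Mv) := by
          rw [Finset.sum_mul]
          exact Finset.sum_le_sum hstep
  have := hsplit ▸ (add_le_add hbound (le_refl Mv))
  linarith

/-- Convergence of entries of powers of a row-stochastic matrix with some
everywhere-positive power: each column becomes constant in the limit. -/
private lemma aux_markov_limit (hne : (Finset.univ : Finset (Fin n)).Nonempty)
    (T : Matrix (Fin n) (Fin n) ℝ)
    (h1 : ∀ i j, 0 ≤ T i j) (h2 : ∀ i, ∑ j, T i j = 1)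
    (M : ℕ) (hM : 0 < M) (ε : ℝ) (hε0 : 0 < ε) (hε : ∀ i j, ε ≤ (T ^ M) i j) :
    ∃ L : Fin n → ℝ, ∀ i j,
      Tendsto (fun t : ℕ => (T ^ t) i j) atTop (nhds (L j)) := by
  set f : ℕ → Fin n → ℝ :=
    fun t j => Finset.sup' Finset.univ hne (fun i => (T ^ t) i j) with hf
  set g : ℕ → Fin n → ℝ :=
    fun t j => Finset.inf' Finset.univ hne (fun i => (T ^ t) i j) with hg
  have hgf : ∀ t j, g t j ≤ f t j := by
    intro t j
    obtain ⟨i0, -⟩ := id hne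
    simp only [hf, hg]
    exact le_trans (Finset.inf'_le (fun i => (T ^ t) i j) (Finset.mem_univ i0))
      (Finset.le_sup' (fun i => (T ^ t) i j) (Finset.mem_univ i0))
  have hmono : ∀ s t j, f (s + t) j ≤ f t j ∧ g t j ≤ g (s + t) j := by
    intro s t j
    have hs1 := aux_pow_nonneg T h1 s
    have hs2 := aux_pow_rowsum T h2 s
    have hkey1 := aux_key_sup hne (T ^ s) (T ^ t) 0 le_rfl
      (fun i j => hs1 i j) hs2 j
    have hkey2 := aux_key_inf hne (T ^ s) (T ^ t) 0 le_rfl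
      (fun i j => hs1 i j) hs2 j
    rw [← pow_add] at hkey1 hkey2
    constructor
    · simp only [hf]; linarith
    · simp only [hg]; linarith
  have hfanti : ∀ j, Antitone fun t => f t j := by
    intro j t t' htt'
    have := (hmono (t' - t) t j).1
    rwa [Nat.sub_add_cancel htt'] at this
  have hgmono : ∀ j, Monotone fun t => g t j := by
    intro j t t' htt'
    have := (hmono (t' - t) t j).2
    rwa [Nat.sub_add_cancel htt'] at this
  set D : ℕ → Fin n → ℝ := fun t j => f t j - g t j with hD
  have hDnn : ∀ t j, 0 ≤ D t j := fun t j => by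
    simp only [hD]; linarith [hgf t j]
  have hDanti : ∀ j, Antitone fun t => D t j := by
    intro j t t' htt'
    simp only [hD]
    have := hfanti j htt'
    have := hgmono j htt'
    simp only at *
    linarith
  set c : ℝ := max (1 - 2 * ε) 0 with hc
  have hc0 : 0 ≤ c := le_max_right _ _
  have hc1 : c < 1 := by
    apply max_lt <;> linarith
  have hstep : ∀ t j, D (M + t) j ≤ c * D t j := by
    intro t j
    have hkey1 := aux_key_sup hne (T ^ M) (T ^ t) ε (le_of_lt hε0) hε
      (aux_pow_rowsum T h2 M) j
    have hkey2 := aux_key_inf hne (T ^ M) (T ^ t) ε (le_of_lt hε0) hε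
      (aux_pow_rowsum T h2 M) j
    rw [← pow_add] at hkey1 hkey2
    have h1' : D (M + t) j ≤ (1 - 2 * ε) * D t j := by
      simp only [hD, hf, hg] at *
      linarith
    calc D (M + t) j ≤ (1 - 2 * ε) * D t j := h1'
      _ ≤ c * D t j := mul_le_mul_of_nonneg_right (le_max_left _ _) (hDnn t j)
  have hgeom : ∀ k j, D (k * M) j ≤ c ^ k * D 0 j := by
    intro k j
    induction k with
    | zero => simp
    | succ k ih =>
      have : (k + 1) * M = M + k * M := by ring
      rw [this]
      calc D (M + k * M) j ≤ c * D (k * M) j := hstep _ j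
        _ ≤ c * (c ^ k * D 0 j) := mul_le_mul_of_nonneg_left ih hc0
        _ = c ^ (k + 1) * D 0 j := by ring
  have hbound : ∀ t j, D t j ≤ c ^ (t / M) * D 0 j := by
    intro t j
    exact le_trans (hDanti j (Nat.div_mul_le_self t M)) (hgeom _ j)
  have hdiv : Tendsto (fun t : ℕ => t / M) atTop atTop := by
    have h : Tendsto (fun t : ℕ => t / M) atTop
        (Filter.map (fun t : ℕ => t / M) atTop) := tendsto_map
    rwa [Filter.map_div_atTop_eq_nat M hM] at h
  have hDto0 : ∀ j, Tendsto (fun t => D t j) atTop (nhds 0) := by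
    intro j
    have hgeo : Tendsto (fun t : ℕ => c ^ (t / M) * D 0 j) atTop (nhds 0) := by
      have := ((tendsto_pow_atTop_nhds_zero_of_lt_one hc0 hc1).comp hdiv).mul_const
        (D 0 j)
      simpa using this
    exact squeeze_zero (fun t => hDnn t j) (fun t => hbound t j) hgeo
  refine ⟨fun j => ⨅ t, f t j, fun i j => ?_⟩
  have hbdd : BddBelow (Set.range fun t => f t j) := by
    refine ⟨g 0 j, fun x hx => ?_⟩
    obtain ⟨t, rfl⟩ := hx
    exact le_trans (hgmono j (Nat.zero_le t)) (hgf t j)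
  have hfL : Tendsto (fun t => f t j) atTop (nhds (⨅ t, f t j)) :=
    tendsto_atTop_ciInf (hfanti j) hbdd
  have hgL : Tendsto (fun t => g t j) atTop (nhds (⨅ t, f t j)) := by
    have h := hfL.sub (hDto0 j)
    have heq : (fun t => g t j) = fun t => f t j - D t j := by
      funext t
      simp only [hD]
      ring
    rw [heq]
    simpa using h
  refine tendsto_of_tendsto_of_tendsto_of_le_of_le hgL hfL ?_ ?_
  · intro t
    simp only [hg]
    exact Finset.inf'_le (fun i => (T ^ t) i j) (Finset.mem_univ i)
  · intro t
    simp only [hf]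
    exact Finset.le_sup' (fun i => (T ^ t) i j) (Finset.mem_univ i)

private lemma aux_exists_pos_power (hne : (Finset.univ : Finset (Fin n)).Nonempty)
    (T : Matrix (Fin n) (Fin n) ℝ) (h1 : ∀ i j, 0 ≤ T i j)
    (hirr : ∀ i j, ∃ t : ℕ, 0 < t ∧ 0 < (T ^ t) i j)
    (haper : ∀ i, ∀ k : ℕ, (∀ t : ℕ, 0 < t → 0 < (T ^ t) i i → k ∣ t) → k = 1) :
    ∃ M : ℕ, 0 < M ∧ ∀ i j, 0 < (T ^ M) i j := by
  have hcof : ∀ i : Fin n, ∃ N : ℕ, 0 < N ∧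
      ∀ t, N ≤ t → t ∈ {t : ℕ | 0 < t ∧ 0 < (T ^ t) i i} := by
    intro i
    apply aux_semigroup_cofinite
    · exact fun s hs => hs.1
    · obtain ⟨t, ht1, ht2⟩ := hirr i i
      exact ⟨t, ht1, ht2⟩
    · rintro a ⟨ha1, ha2⟩ b ⟨hb1, hb2⟩
      refine ⟨by omega, ?_⟩
      calc (0 : ℝ) < (T ^ a) i i * (T ^ b) i i := mul_pos ha2 hb2
        _ ≤ (T ^ (a + b)) i i := aux_pow_entry_ge T h1 a b i i
    · intro k hk
      exact haper i k fun t ht1 ht2 => hk t ⟨ht1, ht2⟩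
  choose N hN1 hN2 using hcof
  choose τ hτ1 hτ2 using hirr
  set M := (∑ i, ∑ j, τ i j) + ∑ i, N i with hM
  have hMpos : 0 < M := by
    have : 0 < ∑ i, N i := Finset.sum_pos (fun i _ => hN1 i) hne
    omega
  refine ⟨M, hMpos, fun i j => ?_⟩
  have hτle : τ i j ≤ ∑ i', ∑ j', τ i' j' := by
    calc τ i j ≤ ∑ j', τ i j' :=
          Finset.single_le_sum (fun k _ => Nat.zero_le _) (Finset.mem_univ j)
      _ ≤ ∑ i', ∑ j', τ i' j' :=
          Finset.single_le_sum (f := fun i' => ∑ j', τ i' j')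
            (fun k _ => Nat.zero_le _) (Finset.mem_univ i)
  have hNle : N i ≤ ∑ i', N i' :=
    Finset.single_le_sum (fun k _ => Nat.zero_le _) (Finset.mem_univ i)
  set s := M - τ i j with hs
  have hsN : N i ≤ s := by omega
  have hmem := hN2 i s hsN
  have hsplit : M = s + τ i j := by omega
  calc (0 : ℝ) < (T ^ s) i i * (T ^ (τ i j)) i j := mul_pos hmem.2 (hτ2 i j)
    _ ≤ (T ^ (s + τ i j)) i j := aux_pow_entry_ge T h1 s (τ i j) i j
    _ = (T ^ M) i j := by rw [← hsplit]

/-- consensus limit of the degree-weighted DeGroot process.  If the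
degree-weighted learning matrix `T` built from a symmetric 0-1 matrix `A` is
irreducible and aperiodic, then `T^t` converges and every row of the limit is the
vector `j ↦ (Σ_i A_ij φ(α,d_j) φ(α,d_i)) / (Σ_{i,j} A_ij φ(α,d_j) φ(α,d_i))`. -/
theorem degroot_consensus_limit
    (n : ℕ) (A : Matrix (Fin n) (Fin n) ℝ)
    (hsym : A.IsSymm) (h01 : ∀ i j, A i j = 0 ∨ A i j = 1)
    (φ : ℝ → ℝ → ℝ) (α : ℝ) (hφ : ∀ d : ℝ, 0 ≤ d → 0 < φ α d)
    (deg : Fin n → ℝ) (hdeg : ∀ i, deg i = ∑ j, A i j)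
    (hden : ∀ i, 0 < ∑ k, A i k * φ α (deg k))
    (T : Matrix (Fin n) (Fin n) ℝ)
    (hT : ∀ i j, T i j = A i j * φ α (deg j) / ∑ k, A i k * φ α (deg k))
    -- irreducibility: the directed graph of `T` is strongly connected
    (hirr : ∀ i j, ∃ t : ℕ, 0 < t ∧ 0 < (T ^ t) i j)
    -- aperiodicity: for each `i`, the gcd of the lengths of cycles through `i` is 1
    (haper : ∀ i, ∀ k : ℕ, (∀ t : ℕ, 0 < t → 0 < (T ^ t) i i → k ∣ t) → k = 1) :
    ∃ Tinf : Matrix (Fin n) (Fin n) ℝ,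
      Tendsto (fun t : ℕ => T ^ t) atTop (nhds Tinf) ∧
      ∀ i j, Tinf i j =
        (∑ i', A i' j * φ α (deg j) * φ α (deg i')) /
          (∑ i', ∑ j', A i' j' * φ α (deg j') * φ α (deg i')) := by
  rcases Nat.eq_zero_or_pos n with rfl | hn
  · -- trivial case `n = 0`
    refine ⟨1, ?_, fun i j => i.elim0⟩
    have hconst : (fun t : ℕ => T ^ t) = fun _ => (1 : Matrix (Fin 0) (Fin 0) ℝ) := by
      funext t
      ext i j
      exact i.elim0
    rw [hconst]
    exact tendsto_const_nhds
  have hne : (Finset.univ : Finset (Fin n)).Nonempty := ⟨⟨0, hn⟩, Finset.mem_univ _⟩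
  -- positivity facts
  have hAnn : ∀ i j, 0 ≤ A i j := by
    intro i j
    rcases h01 i j with h | h <;> rw [h] <;> norm_num
  have hdegnn : ∀ i, 0 ≤ deg i := fun i => by
    rw [hdeg]
    exact Finset.sum_nonneg fun j _ => hAnn i j
  have hφpos : ∀ i, 0 < φ α (deg i) := fun i => hφ _ (hdegnn i)
  have hsym' : ∀ i j, A i j = A j i := by
    intro i j
    have := congrFun (congrFun hsym i) j
    rw [Matrix.transpose_apply] at this
    exact this.symm
  have hTnn : ∀ i j, 0 ≤ T i j := fun i j => by
    rw [hT]
    exact div_nonneg (mul_nonneg (hAnn i j) (hφpos j).le) (hden i).le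
  have hTrow : ∀ i, ∑ j, T i j = 1 := by
    intro i
    have h : ∑ j, T i j = (∑ j, A i j * φ α (deg j)) / (∑ k, A i k * φ α (deg k)) := by
      rw [Finset.sum_div]
      exact Finset.sum_congr rfl fun j _ => hT i j
    rw [h, div_self (ne_of_gt (hden i))]
  -- positive power
  obtain ⟨M, hM, hMpos⟩ := aux_exists_pos_power hne T hTnn hirr haper
  have hne2 : (Finset.univ : Finset (Fin n × Fin n)).Nonempty :=
    ⟨(⟨0, hn⟩, ⟨0, hn⟩), Finset.mem_univ _⟩
  set ε := Finset.inf' Finset.univ hne2 (fun p : Fin n × Fin n => (T ^ M) p.1 p.2)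
    with hεdef
  have hε0 : 0 < ε := by
    rw [hεdef, Finset.lt_inf'_iff]
    exact fun p _ => hMpos p.1 p.2
  have hε : ∀ i j, ε ≤ (T ^ M) i j := fun i j =>
    Finset.inf'_le (fun p : Fin n × Fin n => (T ^ M) p.1 p.2) (Finset.mem_univ (i, j))
  obtain ⟨L, hL⟩ := aux_markov_limit hne T hTnn hTrow M hM ε hε0 hε
  -- the stationary vector
  set ψ : Fin n → ℝ := fun i => φ α (deg i) with hψ
  set Z : ℝ := ∑ i', ∑ j', A i' j' * ψ j' * ψ i' with hZdef
  have hnum : ∀ j, (∑ i', A i' j * ψ j * ψ i') = ψ j * ∑ k, A j k * ψ k := by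
    intro j
    rw [Finset.mul_sum]
    exact Finset.sum_congr rfl fun k _ => by rw [hsym' k j]; ring
  have hZ : Z = ∑ j, ψ j * ∑ k, A j k * ψ k := by
    rw [hZdef, Finset.sum_comm]
    exact Finset.sum_congr rfl fun j _ => hnum j
  have hZpos : 0 < Z := by
    rw [hZ]
    exact Finset.sum_pos (fun j _ => mul_pos (hφpos j) (hden j)) hne
  set p : Fin n → ℝ := fun j => (∑ i', A i' j * ψ j * ψ i') / Z with hp
  have hpval : ∀ j, p j = ψ j * (∑ k, A j k * ψ k) / Z := by
    intro j
    rw [hp]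
    simp only
    rw [hnum j]
  have hpsum : ∑ j, p j = 1 := by
    rw [hp]
    simp only
    rw [← Finset.sum_div]
    rw [show (∑ j, ∑ i', A i' j * ψ j * ψ i') = Z from
      (Finset.sum_congr rfl fun j _ => hnum j).trans hZ.symm]
    exact div_self (ne_of_gt hZpos)
  have hstat : ∀ j, ∑ i, p i * T i j = p j := by
    intro j
    have hterm : ∀ i, p i * T i j = A i j * ψ j * ψ i / Z := by
      intro i
      rw [hpval i, hT i j]
      have hψk : ∀ k, φ α (deg k) = ψ k := fun k => rfl
      simp only [hψk]
      have hSi' : (∑ k, A i k * ψ k) ≠ 0 := by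
        refine ne_of_gt ?_
        have := hden i
        simpa only [hψk] using this
      field_simp
    rw [Finset.sum_congr rfl fun i _ => hterm i, ← Finset.sum_div]
  have hstatpow : ∀ t j, ∑ i, p i * (T ^ t) i j = p j := by
    intro t
    induction t with
    | zero =>
      intro j
      simp [Matrix.one_apply]
    | succ t ih =>
      intro j
      have h1 : ∀ i, p i * (T ^ (t + 1)) i j = ∑ k, p i * T i k * (T ^ t) k j := by
        intro i
        rw [pow_succ', Matrix.mul_apply, Finset.mul_sum]
        exact Finset.sum_congr rfl fun k _ => by ring
      rw [Finset.sum_congr rfl fun i _ => h1 i, Finset.sum_comm]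
      have h2 : ∀ k, ∑ i, p i * T i k * (T ^ t) k j = p k * (T ^ t) k j := by
        intro k
        rw [← Finset.sum_mul, hstat k]
      rw [Finset.sum_congr rfl fun k _ => h2 k]
      exact ih j
  -- identify the limit with the stationary vector
  have hLp : ∀ j, L j = p j := by
    intro j
    have hconv : Tendsto (fun t => ∑ i, p i * (T ^ t) i j) atTop
        (nhds (∑ i, p i * L j)) :=
      tendsto_finset_sum _ fun i _ => (hL i j).const_mul (p i)
    have heq : (fun t => ∑ i, p i * (T ^ t) i j) = fun _ => p j :=
      funext fun t => hstatpow t j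
    rw [heq] at hconv
    have := tendsto_nhds_unique hconv tendsto_const_nhds
    rw [← Finset.sum_mul, hpsum, one_mul] at this
    exact this
  refine ⟨Matrix.of fun _ j => p j, ?_, fun i j => ?_⟩
  · refine tendsto_pi_nhds.mpr ?_
    intro i
    rw [tendsto_pi_nhds]
    intro j
    simpa [hLp j] using hL i j
  · simp only [Matrix.of_apply, hp, hψ, hZdef]
end

section
/- Let R be the expected adjacency matrix of a stochastic block model with m groups of sizes n₁,…,n_m and symmetric linking matrix P, let φ be a positive weight function, α ∈ ℝ, and let T* be the n×n matrix with T*_ij = R_ij φ(α, d_j(R)) / Σ_k R_ik φ(α, d_k(R)) (denominators positive). Define the m×m matrix F by F_{kl} = n_l P_{kl} φ(α, Σ_h n_h P_{lh}) / Σ_{l'} n_{l'} P_{kl'} φ(α, Σ_h n_h P_{l'h}). If (v₁,…,v_m) is an eigenvector of F with eigenvalue λ, then the n-vector taking the constant value v_k on every vertex of group k is an eigenvector of T* with eigenvalue λ; in particular every eigenvalue of F is an eigenvalue of T*. -/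
/-- in a stochastic block model with expected adjacency matrix `R`,
eigenvectors of the reduced `m×m` matrix `F` lift (constant on groups) to eigenvectors
of the degree-weighted learning matrix `T*`; in particular every eigenvalue of `F` is
an eigenvalue of `T*`.  Vertices are modelled as pairs `⟨k, _⟩` with `k` the group. -/
theorem sbm_reduced_matrix_eigenvector_lift
    (m : ℕ) (sizes : Fin m → ℕ) (hsizes : ∀ k, 0 < sizes k)
    (P : Matrix (Fin m) (Fin m) ℝ) (hPsym : P.IsSymm)
    (hP01 : ∀ k l, 0 ≤ P k l ∧ P k l ≤ 1)
    (φ : ℝ → ℝ → ℝ) (α : ℝ)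
    (R : Matrix ((k : Fin m) × Fin (sizes k)) ((k : Fin m) × Fin (sizes k)) ℝ)
    (hR : ∀ i j, R i j = P i.1 j.1)
    (degR : ((k : Fin m) × Fin (sizes k)) → ℝ)
    (hdegR : ∀ i, degR i = ∑ j, R i j)
    (hden : ∀ i, 0 < ∑ k, R i k * φ α (degR k))
    (Tstar : Matrix ((k : Fin m) × Fin (sizes k)) ((k : Fin m) × Fin (sizes k)) ℝ)
    (hT : ∀ i j, Tstar i j = R i j * φ α (degR j) / ∑ k, R i k * φ α (degR k))
    (F : Matrix (Fin m) (Fin m) ℝ)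
    (hF : ∀ k l, F k l =
      (sizes l : ℝ) * P k l * φ α (∑ h, (sizes h : ℝ) * P l h) /
        ∑ l', (sizes l' : ℝ) * P k l' * φ α (∑ h, (sizes h : ℝ) * P l' h)) :
    (∀ (v : Fin m → ℝ) (lam : ℝ), F.mulVec v = lam • v →
      Tstar.mulVec (fun i => v i.1) = lam • (fun i => v i.1)) ∧
    (∀ lam ∈ spectrum ℝ F, lam ∈ spectrum ℝ Tstar) := by
  -- degree of any vertex in group l
  have hdeg : ∀ i : (k : Fin m) × Fin (sizes k),
      degR i = ∑ h, (sizes h : ℝ) * P i.1 h := by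
    intro i
    rw [hdegR i, ← Finset.univ_sigma_univ, Finset.sum_sigma]
    simp [hR, mul_comm]
  -- denominator identity
  have hdenEq : ∀ i : (k : Fin m) × Fin (sizes k),
      (∑ k, R i k * φ α (degR k))
        = ∑ l', (sizes l' : ℝ) * P i.1 l' * φ α (∑ h, (sizes h : ℝ) * P l' h) := by
    intro i
    rw [← Finset.univ_sigma_univ, Finset.sum_sigma]
    refine Finset.sum_congr rfl fun l _ => ?_
    simp only [hR, hdeg]
    rw [Finset.sum_const, nsmul_eq_mul]
    simp [Fintype.card_fin]; ring
  have key : ∀ (v : Fin m → ℝ) (lam : ℝ), F.mulVec v = lam • v →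
      Tstar.mulVec (fun i => v i.1) = lam • (fun i => v i.1) := by
    intro v lam hv
    funext i
    have hvk : ∑ l, F i.1 l * v l = lam * v i.1 := by
      have := congrFun hv i.1
      simpa [Matrix.mulVec, dotProduct] using this
    have hD : (∑ l', (sizes l' : ℝ) * P i.1 l' * φ α (∑ h, (sizes h : ℝ) * P l' h)) ≠ 0 := by
      rw [← hdenEq i]; exact ne_of_gt (hden i)
    show ∑ j, Tstar i j * v j.1 = lam * v i.1
    rw [← hvk, ← Finset.univ_sigma_univ, Finset.sum_sigma]
    refine Finset.sum_congr rfl fun l _ => ?_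
    simp only [hT]
    simp only [hdenEq i]
    simp only [hR, hdeg, hF]
    rw [Finset.sum_const, nsmul_eq_mul]
    simp only [Finset.card_univ, Fintype.card_fin]
    field_simp
  refine ⟨key, fun lam hlam => ?_⟩
  -- move to endomorphisms
  have hFe : lam ∈ spectrum ℝ (Matrix.toLinAlgEquiv' F) := by
    rwa [AlgEquiv.spectrum_eq]
  have hFeig : Module.End.HasEigenvalue (Matrix.toLinAlgEquiv' F) lam :=
    (Module.End.hasEigenvalue_iff_mem_spectrum).2 hFe
  obtain ⟨v, hvmem, hvnz⟩ := hFeig.exists_hasEigenvector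
  have hvF : F.mulVec v = lam • v := by
    have := Module.End.mem_eigenspace_iff.1 hvmem
    have h2 : Matrix.toLin' F v = F.mulVec v := Matrix.toLin'_apply F v
    rw [show (Matrix.toLinAlgEquiv' F : (Fin m → ℝ) →ₗ[ℝ] (Fin m → ℝ)) = Matrix.toLin' F from rfl] at this
    rw [h2] at this
    exact this
  have hTw : Tstar.mulVec (fun i => v i.1) = lam • (fun i => v i.1) := key v lam hvF
  -- the lifted vector is nonzero
  have hvne' : v ≠ 0 := hvnz
  obtain ⟨k, hk⟩ : ∃ k, v k ≠ 0 := Function.ne_iff.1 hvne'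
  have hwne : (fun i : (k : Fin m) × Fin (sizes k) => v i.1) ≠ 0 := by
    intro h
    exact hk (congrFun h ⟨k, ⟨0, hsizes k⟩⟩)
  have hTeig : Module.End.HasEigenvalue (Matrix.toLinAlgEquiv' Tstar) lam := by
    refine Module.End.hasEigenvalue_of_hasEigenvector ⟨?_, hwne⟩
    rw [Module.End.mem_eigenspace_iff]
    rw [show (Matrix.toLinAlgEquiv' Tstar : _ →ₗ[ℝ] _) = Matrix.toLin' Tstar from rfl, Matrix.toLin'_apply]
    exact hTw
  have := Module.End.hasEigenvalue_iff_mem_spectrum.1 hTeig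
  rwa [AlgEquiv.spectrum_eq] at this
end

section
/- Let m ≥ 2 be an integer and a, b, c, d, e real numbers with a + (m−1)b = 1 and e + c + (m−2)d = 1. Let F be the m×m matrix whose first row is (a, b, …, b) and whose k-th row, for 2 ≤ k ≤ m, has entry e in column 1, entry c in column k, and entry d in every other column. Then the characteristic polynomial of F is (λ − 1)(λ − (a−e))(λ − (c−d))^{m−2}; that is, the eigenvalues of F counted with multiplicity are 1, a−e, and c−d with multiplicity m−2. -/
open Polynomial

namespace EGcp

lemma sum_ind {n : ℕ} (c : ℕ) (hc : c < n) (f : Fin n → ℝ) :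
    ∑ j : Fin n, (if (j:ℕ) = c then f j else 0) = f ⟨c, hc⟩ := by
  have h : ∀ j : Fin n, ((j:ℕ) = c) = (j = ⟨c, hc⟩) := fun j => by
    simp [Fin.ext_iff]
  simp only [h]
  simp

lemma sum_ind_zero {n : ℕ} (c : ℕ) (hc : n ≤ c) (f : Fin n → ℝ) :
    ∑ j : Fin n, (if (j:ℕ) = c then f j else 0) = 0 := by
  apply Finset.sum_eq_zero
  intro j _
  rw [if_neg]
  omega

def P (n : ℕ) : Matrix (Fin (n+2)) (Fin (n+2)) ℝ := fun i j =>
  if (j:ℕ) = 0 then 1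
  else if (j:ℕ) = 1 then (if (i:ℕ) = 0 then 1 else 0)
  else if (i:ℕ) + 1 = (j:ℕ) then 1 else if (i:ℕ) = (j:ℕ) then -1 else 0

noncomputable def Q (n : ℕ) : Matrix (Fin (n+2)) (Fin (n+2)) ℝ := fun i j =>
  if (j:ℕ) = 0 then (if (i:ℕ) = 1 then 1 else 0)
  else if (i:ℕ) = 0 then 1/(n+1)
  else if (i:ℕ) = 1 then -(1/(n+1))
  else -(((i:ℕ):ℝ)-1)/(n+1) + (if (j:ℕ) < (i:ℕ) then 1 else 0)

def T (n : ℕ) (a c d e : ℝ) : Matrix (Fin (n+2)) (Fin (n+2)) ℝ := fun i j =>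
  if (i:ℕ) = 0 then (if (j:ℕ) = 0 then 1 else if (j:ℕ) = 1 then e else 0)
  else if (i:ℕ) = (j:ℕ) then (if (i:ℕ) = 1 then a - e else c - d) else 0

lemma P_mul_Q (n : ℕ) : P n * Q n = 1 := by
  ext i k
  rw [Matrix.mul_apply]
  have expand : ∀ j : Fin (n+2), P n i j * Q n j k =
      (if (j:ℕ) = 0 then Q n j k else 0)
      + (if (j:ℕ) = 1 then (if (i:ℕ) = 0 then Q n j k else 0) else 0)
      + ((if (j:ℕ) = (i:ℕ)+1 then (if 1 ≤ (i:ℕ) then Q n j k else 0) else 0)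
      - (if (j:ℕ) = (i:ℕ) then (if 2 ≤ (i:ℕ) then Q n j k else 0) else 0)) := by
    intro j
    simp only [P]
    split_ifs <;> first | (exfalso; omega) | ring
  rw [Finset.sum_congr rfl (fun j _ => expand j)]
  rw [Finset.sum_add_distrib, Finset.sum_add_distrib, Finset.sum_sub_distrib]
  rw [sum_ind (n := n+2) 0 (by omega), sum_ind (n := n+2) 1 (by omega), sum_ind (n := n+2) (i:ℕ) (by omega)]
  rw [show (1 : Matrix (Fin (n+2)) (Fin (n+2)) ℝ) i k
      = if (i:ℕ) = (k:ℕ) then 1 else 0 from by simp [Matrix.one_apply, Fin.ext_iff]]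
  have hn : ((n:ℝ)+1) ≠ 0 := by positivity
  by_cases hitop : (i:ℕ) = n+1
  · rw [sum_ind_zero (n := n+2) ((i:ℕ)+1) (by omega)]
    rcases Nat.eq_zero_or_pos n with hn0 | hn0
    all_goals try subst hn0
    all_goals simp only [hitop, Q, Fin.val_mk]
    all_goals norm_num
    all_goals split_ifs <;>
        first
          | (exfalso; omega)
          | (exfalso; simp only [Fin.lt_def] at *; omega)
          | (exfalso; simp only [Fin.ext_iff, Fin.val_zero, Fin.lt_def] at *; omega)
          | (push_cast; field_simp; ring)
          | (push_cast; field_simp)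
          | omega
  · by_cases hi0 : (i:ℕ) = 0
    · rw [sum_ind (n := n+2) ((i:ℕ)+1) (by omega)]
      simp only [hi0, Q, Fin.val_mk]
      norm_num
      split_ifs <;>
        first
          | (exfalso; omega)
          | (exfalso; simp only [Fin.lt_def] at *; omega)
          | (exfalso; simp only [Fin.ext_iff, Fin.val_zero, Fin.lt_def] at *; omega)
          | (push_cast; field_simp; ring)
          | (push_cast; field_simp)
          | omega
    · by_cases hi1 : (i:ℕ) = 1
      · rw [sum_ind (n := n+2) ((i:ℕ)+1) (by omega)]
        simp only [hi1, Q, Fin.val_mk]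
        norm_num
        split_ifs <;>
        first
          | (exfalso; omega)
          | (exfalso; simp only [Fin.lt_def] at *; omega)
          | (exfalso; simp only [Fin.ext_iff, Fin.val_zero, Fin.lt_def] at *; omega)
          | (push_cast; field_simp; ring)
          | (push_cast; field_simp)
          | omega
      · rw [sum_ind (n := n+2) ((i:ℕ)+1) (by omega)]
        simp only [Q, Fin.val_mk]
        norm_num
        split_ifs <;>
        first
          | (exfalso; omega)
          | (exfalso; simp only [Fin.lt_def] at *; omega)
          | (exfalso; simp only [Fin.ext_iff, Fin.val_zero, Fin.lt_def] at *; omega)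
          | (push_cast; field_simp; ring)
          | (push_cast; field_simp)
          | omega





lemma row_sum_split (n : ℕ) (x y : ℝ) :
    ∑ j : Fin (n+2), (if (j:ℕ) = 0 then x else y) = x + ((n:ℝ)+1)*y := by
  have h : ∀ j : Fin (n+2), (if (j:ℕ) = 0 then x else y)
      = y + (if (j:ℕ) = 0 then x - y else 0) := by
    intro j; split_ifs <;> ring
  simp only [h]
  rw [Finset.sum_add_distrib, sum_ind (n := n+2) 0 (by omega)]
  simp [Finset.sum_const, Finset.card_univ]
  push_cast; ring

lemma row_sum_split2 (n : ℕ) (x y z : ℝ) (t : ℕ) (ht : 1 ≤ t) (ht2 : t < n+2) :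
    ∑ j : Fin (n+2), (if (j:ℕ) = 0 then x else if (j:ℕ) = t then y else z)
      = x + y + (n:ℝ)*z := by
  have h : ∀ j : Fin (n+2), (if (j:ℕ) = 0 then x else if (j:ℕ) = t then y else z)
      = z + ((if (j:ℕ) = 0 then x - z else 0) + (if (j:ℕ) = t then y - z else 0)) := by
    intro j; split_ifs <;> first | (exfalso; omega) | ring
  simp only [h]
  rw [Finset.sum_add_distrib, Finset.sum_add_distrib,
    sum_ind (n := n+2) 0 (by omega), sum_ind (n := n+2) t ht2]
  simp [Finset.sum_const, Finset.card_univ]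
  push_cast; ring

lemma F_mul_P (n : ℕ) (a b c d e : ℝ)
    (hrow1 : a + ((n:ℝ)+1) * b = 1) (hrow2 : e + c + (n:ℝ) * d = 1)
    (F : Matrix (Fin (n+2)) (Fin (n+2)) ℝ)
    (hF : ∀ i j : Fin (n+2), F i j =
      if (i : ℕ) = 0 then (if (j : ℕ) = 0 then a else b)
      else (if (j : ℕ) = 0 then e else if j = i then c else d)) :
    F * P n = P n * T n a c d e := by
  ext i k
  rw [Matrix.mul_apply, Matrix.mul_apply]
  -- RHS first
  have hRHS : ∑ j, P n i j * T n a c d e j k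
      = (if (k:ℕ) = 0 then 1
         else if (k:ℕ) = 1 then e + (if (i:ℕ) = 0 then a - e else 0)
         else (if (i:ℕ) + 1 = (k:ℕ) then c - d
               else if (i:ℕ) = (k:ℕ) then -(c - d) else 0)) := by
    have expand : ∀ j : Fin (n+2), P n i j * T n a c d e j k =
        (if (j:ℕ) = 0 then
          P n i j * (if (k:ℕ) = 0 then 1 else if (k:ℕ) = 1 then e else 0) else 0)
        + (if (j:ℕ) = (k:ℕ) then
            (if (k:ℕ) = 0 then 0
             else P n i j * (if (k:ℕ) = 1 then a - e else c - d)) else 0) := by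
      intro j
      simp only [T]
      split_ifs <;> first | (exfalso; omega) | ring
    rw [Finset.sum_congr rfl (fun j _ => expand j)]
    rw [Finset.sum_add_distrib, sum_ind (n := n+2) 0 (by omega),
      sum_ind (n := n+2) (k:ℕ) (by omega)]
    simp only [P, Fin.val_mk]
    split_ifs <;> first | (exfalso; omega) | ring
  rw [hRHS]
  -- LHS by cases on k
  by_cases hk0 : (k:ℕ) = 0
  · have hP : ∀ j : Fin (n+2), P n j k = 1 := by
      intro j; simp only [P, hk0]; norm_num
    simp only [hP, mul_one, if_pos hk0]
    by_cases hi0 : (i:ℕ) = 0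
    · have : ∀ j : Fin (n+2), F i j = if (j:ℕ) = 0 then a else b := by
        intro j; rw [hF]; rw [if_pos hi0]
      simp only [this]
      rw [row_sum_split]
      linarith
    · have : ∀ j : Fin (n+2), F i j
          = if (j:ℕ) = 0 then e else if (j:ℕ) = (i:ℕ) then c else d := by
        intro j; rw [hF, if_neg hi0]
        congr 1
        simp [Fin.ext_iff]
      simp only [this]
      rw [row_sum_split2 n e c d (i:ℕ) (by omega) (by omega)]
      linarith
  · by_cases hk1 : (k:ℕ) = 1
    · have hP : ∀ j : Fin (n+2), P n j k = if (j:ℕ) = 0 then 1 else 0 := by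
        intro j; simp only [P, hk1]; norm_num
      have hsummand : ∀ j : Fin (n+2), F i j * P n j k
          = if (j:ℕ) = 0 then F i j else 0 := by
        intro j; rw [hP]; split_ifs <;> ring
      rw [Finset.sum_congr rfl (fun j _ => hsummand j),
        sum_ind (n := n+2) 0 (by omega), hF]
      simp only [Fin.val_mk, if_neg hk0, if_pos hk1]
      split_ifs <;> first | (exfalso; omega) | ring
    · -- 2 ≤ k
      have hk2 : 2 ≤ (k:ℕ) := by omega
      have hsummand : ∀ j : Fin (n+2), F i j * P n j k
          = (if (j:ℕ) = (k:ℕ) - 1 then F i j else 0)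
            - (if (j:ℕ) = (k:ℕ) then F i j else 0) := by
        intro j
        simp only [P]
        split_ifs <;> first | (exfalso; omega) | ring
      rw [Finset.sum_congr rfl (fun j _ => hsummand j), Finset.sum_sub_distrib,
        sum_ind (n := n+2) ((k:ℕ)-1) (by omega), sum_ind (n := n+2) (k:ℕ) (by omega),
        hF, hF]
      simp only [Fin.val_mk, if_neg hk0, if_neg hk1, Fin.ext_iff]
      split_ifs <;> first | (exfalso; omega) | ring



lemma T_block (n : ℕ) (a c d e : ℝ) : (T n a c d e).BlockTriangular id := by
  intro i j h
  simp only [id] at h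
  simp only [T]
  have h1 : ¬ (i:ℕ) = 0 := by
    intro h0
    have : (j:ℕ) < (i:ℕ) := h
    omega
  have h2 : ¬ (i:ℕ) = (j:ℕ) := by
    have : (j:ℕ) < (i:ℕ) := h
    omega
  rw [if_neg h1, if_neg h2]

lemma charpoly_T (n : ℕ) (a c d e : ℝ) :
    (T n a c d e).charpoly = (X - C 1) * (X - C (a - e)) * (X - C (c - d)) ^ n := by
  rw [Matrix.charpoly_of_upperTriangular _ (T_block n a c d e)]
  rw [Fin.prod_univ_succ, Fin.prod_univ_succ]
  have h0 : T n a c d e 0 0 = 1 := by simp [T]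
  have h1 : T n a c d e (0:Fin (n+1)).succ (0:Fin (n+1)).succ = a - e := by
    simp [T]
  have h2 : ∀ i : Fin n, T n a c d e i.succ.succ i.succ.succ = c - d := by
    intro i
    simp only [T, Fin.val_succ]
    norm_num
  rw [h0, h1]
  rw [Finset.prod_congr rfl (fun i _ => by rw [h2 i])]
  rw [Finset.prod_const, Finset.card_univ, Fintype.card_fin]
  ring

lemma charpoly_conj {n : ℕ} (Pm Qm A : Matrix (Fin n) (Fin n) ℝ) (h : Pm * Qm = 1) :
    (Pm * A * Qm).charpoly = A.charpoly := by
  have key : Matrix.charmatrix (Pm * A * Qm)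
      = (Pm.map C) * Matrix.charmatrix A * (Qm.map C) := by
    unfold Matrix.charmatrix
    have hmap : ∀ M N : Matrix (Fin n) (Fin n) ℝ,
        (C : ℝ →+* ℝ[X]).mapMatrix (M * N)
          = (C : ℝ →+* ℝ[X]).mapMatrix M * (C : ℝ →+* ℝ[X]).mapMatrix N := by
      intro M N; simp
    rw [Matrix.mul_sub, Matrix.sub_mul]
    congr 1
    · -- (Pm.map C) * scalar X * (Qm.map C) = scalar X
      rw [show (Matrix.scalar (Fin n) (X : ℝ[X])) = (X : ℝ[X]) • (1 : Matrix (Fin n) (Fin n) ℝ[X]) from by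
        simp [Matrix.scalar, Matrix.smul_one_eq_diagonal]]
      rw [Matrix.mul_smul, Matrix.mul_one, Matrix.smul_mul]
      congr 1
      rw [show (Pm.map C) = (C : ℝ →+* ℝ[X]).mapMatrix Pm from rfl,
        show (Qm.map C) = (C : ℝ →+* ℝ[X]).mapMatrix Qm from rfl,
        ← hmap, h]
      simp
    · rw [show (Pm.map C) = (C : ℝ →+* ℝ[X]).mapMatrix Pm from rfl,
        show (Qm.map C) = (C : ℝ →+* ℝ[X]).mapMatrix Qm from rfl, ← hmap, ← hmap]
  unfold Matrix.charpoly
  rw [key, Matrix.det_mul, Matrix.det_mul]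
  have hdet : (Pm.map C).det * (Qm.map C).det = 1 := by
    rw [← Matrix.det_mul, ← Matrix.map_mul, h]
    simp
  calc (Pm.map C).det * (Matrix.charmatrix A).det * (Qm.map C).det
      = (Matrix.charmatrix A).det * ((Pm.map C).det * (Qm.map C).det) := by ring
    _ = (Matrix.charmatrix A).det := by rw [hdet, mul_one]


end EGcp

open EGcp in
/-- characteristic polynomial of the reduced Elite–Grassroots matrix.
`F` has first row `(a, b, …, b)` and row `k ≥ 2` with `e` in column 1, `c` in column
`k` and `d` elsewhere; under the row-sum conditions its characteristic polynomial is
`(λ − 1)(λ − (a−e))(λ − (c−d))^{m−2}`. -/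
theorem elite_grassroots_charpoly
    (m : ℕ) (hm : 2 ≤ m) (a b c d e : ℝ)
    (hrow1 : a + ((m : ℝ) - 1) * b = 1)
    (hrow2 : e + c + ((m : ℝ) - 2) * d = 1)
    (F : Matrix (Fin m) (Fin m) ℝ)
    (hF : ∀ i j : Fin m, F i j =
      if (i : ℕ) = 0 then (if (j : ℕ) = 0 then a else b)
      else (if (j : ℕ) = 0 then e else if j = i then c else d)) :
    F.charpoly = (X - C 1) * (X - C (a - e)) * (X - C (c - d)) ^ (m - 2) := by
  obtain ⟨n, rfl⟩ : ∃ n, m = n + 2 := ⟨m - 2, by omega⟩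
  have h1 : a + ((n:ℝ)+1) * b = 1 := by push_cast at hrow1 ⊢; linarith
  have h2 : e + c + (n:ℝ) * d = 1 := by push_cast at hrow2 ⊢; linarith
  have hFP := F_mul_P n a b c d e h1 h2 F hF
  have hPQ := P_mul_Q n
  have hFconj : F = P n * (T n a c d e) * Q n := by
    calc F = F * (P n * Q n) := by rw [hPQ, Matrix.mul_one]
      _ = (F * P n) * Q n := by rw [Matrix.mul_assoc]
      _ = (P n * T n a c d e) * Q n := by rw [hFP]
  rw [hFconj, charpoly_conj _ _ _ hPQ, charpoly_T]
  norm_num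
end

section
/- Consider the Elite–Grassroots model with m = 2 groups of sizes n₁ ≠ n₂, within-group probability p and between-group probability q, 0 < p, q < 1, p ≠ q, a positive weight function φ and α ∈ ℝ. Let T* be the degree-weighted learning matrix built from the expected adjacency matrix R. Then the second-largest-in-magnitude eigenvalue of T* satisfies |λ₂(T*)| = | n₁ p φ₁ / (n₁ p φ₁ + n₂ q φ₂) − n₁ q φ₁ / (n₁ q φ₁ + n₂ p φ₂) |, where φ₁ = φ(α, d₁*), φ₂ = φ(α, d₂*), d₁* = n₁p + n₂q and d₂* = n₁q + n₂p. -/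
open Matrix Module.End

/-- Membership in the spectrum of a real matrix is equivalent to existence of an
eigenvector. -/
lemma matrix_mem_spectrum_iff {n : Type*} [Fintype n] [DecidableEq n]
    (M : Matrix n n ℝ) (μ : ℝ) :
    μ ∈ spectrum ℝ M ↔ ∃ v : n → ℝ, v ≠ 0 ∧ M.mulVec v = μ • v := by
  rw [← AlgEquiv.spectrum_eq (Matrix.toLinAlgEquiv' : Matrix n n ℝ ≃ₐ[ℝ] _),
    ← Module.End.hasEigenvalue_iff_mem_spectrum]
  constructor
  · intro h
    obtain ⟨v, hv⟩ := h.exists_hasEigenvector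
    refine ⟨v, hv.2, ?_⟩
    have := mem_eigenspace_iff.mp hv.1
    simpa [Matrix.toLinAlgEquiv'_apply] using this
  · rintro ⟨v, hv0, hv⟩
    refine hasEigenvalue_of_hasEigenvector (x := v) ⟨mem_eigenspace_iff.mpr ?_, hv0⟩
    simpa [Matrix.toLinAlgEquiv'_apply] using hv

/-- `μ` is a second-largest-in-magnitude (real) eigenvalue of the matrix `M`. -/
def IsSecondMagEig {V : Type*} [Fintype V] [DecidableEq V]
    (M : Matrix V V ℝ) (μ : ℝ) : Prop :=
  ∃ lam1 ∈ spectrum ℝ M, (∀ x ∈ spectrum ℝ M, |x| ≤ |lam1|) ∧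
    μ ∈ spectrum ℝ M ∧ μ ≠ lam1 ∧ ∀ x ∈ spectrum ℝ M, x ≠ lam1 → |x| ≤ |μ|

/-- in the Elite–Grassroots model with `m = 2` groups (sizes `n₁ ≠ n₂`,
within-group probability `p`, between-group probability `q`), the second-largest-in-
magnitude eigenvalue of the degree-weighted learning matrix `T*` built from the
expected adjacency matrix satisfies the explicit formula. -/
theorem elite_grassroots_two_groups_lambda2
    (n₁ n₂ : ℕ) (hn₁ : 0 < n₁) (hn₂ : 0 < n₂) (hne : n₁ ≠ n₂)
    (p q : ℝ) (hp : 0 < p) (hp1 : p < 1) (hq : 0 < q) (hq1 : q < 1) (hpq : p ≠ q)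
    (φ : ℝ → ℝ → ℝ) (hφpos : ∀ a d : ℝ, 0 ≤ d → 0 < φ a d) (α : ℝ)
    (R : Matrix (Fin n₁ ⊕ Fin n₂) (Fin n₁ ⊕ Fin n₂) ℝ)
    (hR : ∀ i j, R i j = if i.isLeft = j.isLeft then p else q)
    (degR : (Fin n₁ ⊕ Fin n₂) → ℝ) (hdegR : ∀ i, degR i = ∑ j, R i j)
    (Tstar : Matrix (Fin n₁ ⊕ Fin n₂) (Fin n₁ ⊕ Fin n₂) ℝ)
    (hT : ∀ i j, Tstar i j = R i j * φ α (degR j) / ∑ k, R i k * φ α (degR k))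
    (d₁star d₂star φ₁ φ₂ : ℝ)
    (hd₁ : d₁star = (n₁ : ℝ) * p + (n₂ : ℝ) * q)
    (hd₂ : d₂star = (n₁ : ℝ) * q + (n₂ : ℝ) * p)
    (hφ₁ : φ₁ = φ α d₁star) (hφ₂ : φ₂ = φ α d₂star) :
    ∀ μ : ℝ, IsSecondMagEig Tstar μ →
      |μ| = |(n₁ : ℝ) * p * φ₁ / ((n₁ : ℝ) * p * φ₁ + (n₂ : ℝ) * q * φ₂) -
             (n₁ : ℝ) * q * φ₁ / ((n₁ : ℝ) * q * φ₁ + (n₂ : ℝ) * p * φ₂)| := by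
  -- positivity of sizes as reals
  have hn₁R : (0:ℝ) < n₁ := by exact_mod_cast hn₁
  have hn₂R : (0:ℝ) < n₂ := by exact_mod_cast hn₂
  -- degrees
  have hdeg_l : ∀ a : Fin n₁, degR (Sum.inl a) = d₁star := by
    intro a
    rw [hdegR, Fintype.sum_sum_type]
    simp only [hR, Sum.isLeft_inl, Sum.isLeft_inr]
    simp [hd₁, mul_comm]
  have hdeg_r : ∀ b : Fin n₂, degR (Sum.inr b) = d₂star := by
    intro b
    rw [hdegR, Fintype.sum_sum_type]
    simp only [hR, Sum.isLeft_inl, Sum.isLeft_inr]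
    simp [hd₂]
  have hd₁0 : 0 ≤ d₁star := by rw [hd₁]; positivity
  have hd₂0 : 0 ≤ d₂star := by rw [hd₂]; positivity
  have hφ₁pos : 0 < φ₁ := hφ₁ ▸ hφpos α d₁star hd₁0
  have hφ₂pos : 0 < φ₂ := hφ₂ ▸ hφpos α d₂star hd₂0
  set S₁ : ℝ := (n₁ : ℝ) * p * φ₁ + (n₂ : ℝ) * q * φ₂ with hS₁
  set S₂ : ℝ := (n₁ : ℝ) * q * φ₁ + (n₂ : ℝ) * p * φ₂ with hS₂
  have hS₁pos : 0 < S₁ := by positivity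
  have hS₂pos : 0 < S₂ := by positivity
  -- the weighted row sums
  have hsum_l : ∀ a : Fin n₁, (∑ k, R (Sum.inl a) k * φ α (degR k)) = S₁ := by
    intro a
    rw [Fintype.sum_sum_type]
    simp only [hR, Sum.isLeft_inl, Sum.isLeft_inr]
    have : ∀ b : Fin n₁, φ α (degR (Sum.inl b)) = φ₁ := fun b => by rw [hdeg_l, hφ₁]
    have h2 : ∀ b : Fin n₂, φ α (degR (Sum.inr b)) = φ₂ := fun b => by rw [hdeg_r, hφ₂]
    simp [this, h2, hS₁]
    ring
  have hsum_r : ∀ b : Fin n₂, (∑ k, R (Sum.inr b) k * φ α (degR k)) = S₂ := by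
    intro b
    rw [Fintype.sum_sum_type]
    simp only [hR, Sum.isLeft_inl, Sum.isLeft_inr]
    have : ∀ b : Fin n₁, φ α (degR (Sum.inl b)) = φ₁ := fun b => by rw [hdeg_l, hφ₁]
    have h2 : ∀ b : Fin n₂, φ α (degR (Sum.inr b)) = φ₂ := fun b => by rw [hdeg_r, hφ₂]
    simp [this, h2, hS₂]
    ring
  -- entries of Tstar
  have hT_ll : ∀ a b, Tstar (Sum.inl a) (Sum.inl b) = p * φ₁ / S₁ := by
    intro a b; rw [hT, hsum_l, hdeg_l, ← hφ₁, hR]; simp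
  have hT_lr : ∀ a b, Tstar (Sum.inl a) (Sum.inr b) = q * φ₂ / S₁ := by
    intro a b; rw [hT, hsum_l, hdeg_r, ← hφ₂, hR]; simp
  have hT_rl : ∀ a b, Tstar (Sum.inr a) (Sum.inl b) = q * φ₁ / S₂ := by
    intro a b; rw [hT, hsum_r, hdeg_l, ← hφ₁, hR]; simp
  have hT_rr : ∀ a b, Tstar (Sum.inr a) (Sum.inr b) = p * φ₂ / S₂ := by
    intro a b; rw [hT, hsum_r, hdeg_r, ← hφ₂, hR]; simp
  set A : ℝ := (n₁ : ℝ) * p * φ₁ / S₁ with hA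
  set C : ℝ := (n₁ : ℝ) * q * φ₁ / S₂ with hC
  have hApos : 0 < A := by positivity
  have hCpos : 0 < C := by positivity
  have hA1 : A < 1 := by
    rw [hA, div_lt_one hS₁pos, hS₁]
    have : 0 < (n₂:ℝ) * q * φ₂ := by positivity
    linarith
  have hC1 : C < 1 := by
    rw [hC, div_lt_one hS₂pos, hS₂]
    have : 0 < (n₂:ℝ) * p * φ₂ := by positivity
    linarith
  have hA' : (p * φ₁ / S₁) * (n₁ : ℝ) = A := by rw [hA]; ring
  have hA'' : (q * φ₂ / S₁) * (n₂ : ℝ) = 1 - A := by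
    rw [hA, div_mul_eq_mul_div, eq_sub_iff_add_eq, ← add_div,
      div_eq_one_iff_eq (ne_of_gt hS₁pos), hS₁]
    ring
  have hC' : (q * φ₁ / S₂) * (n₁ : ℝ) = C := by rw [hC]; ring
  have hC'' : (p * φ₂ / S₂) * (n₂ : ℝ) = 1 - C := by
    rw [hC, div_mul_eq_mul_div, eq_sub_iff_add_eq, ← add_div,
      div_eq_one_iff_eq (ne_of_gt hS₂pos), hS₂]
    ring
  have hAC : A ≠ C := by
    intro h
    rw [hA, hC, div_eq_div_iff (ne_of_gt hS₁pos) (ne_of_gt hS₂pos)] at h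
    rw [hS₁, hS₂] at h
    have : (p - q) * ((n₁:ℝ) * (n₂:ℝ) * φ₁ * φ₂ * (p + q)) = 0 := by linear_combination h
    have hne2 : (p - q) ≠ 0 := sub_ne_zero.mpr hpq
    have hfac : (0:ℝ) < (n₁:ℝ) * (n₂:ℝ) * φ₁ * φ₂ * (p + q) := by positivity
    rcases mul_eq_zero.mp this with h1 | h2
    · exact hne2 h1
    · exact (ne_of_gt hfac) h2
  -- mulVec formulas
  have hmv_l : ∀ (v : (Fin n₁ ⊕ Fin n₂) → ℝ) (a : Fin n₁),
      Tstar.mulVec v (Sum.inl a)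
        = (p * φ₁ / S₁) * (∑ b, v (Sum.inl b)) + (q * φ₂ / S₁) * (∑ b, v (Sum.inr b)) := by
    intro v a
    have h1 : ∑ b, Tstar (Sum.inl a) (Sum.inl b) * v (Sum.inl b)
        = (p * φ₁ / S₁) * ∑ b, v (Sum.inl b) := by
      rw [Finset.mul_sum]
      exact Finset.sum_congr rfl fun b _ => by rw [hT_ll]
    have h2 : ∑ b, Tstar (Sum.inl a) (Sum.inr b) * v (Sum.inr b)
        = (q * φ₂ / S₁) * ∑ b, v (Sum.inr b) := by
      rw [Finset.mul_sum]
      exact Finset.sum_congr rfl fun b _ => by rw [hT_lr]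
    simp only [Matrix.mulVec, dotProduct, Fintype.sum_sum_type]
    rw [h1, h2]
  have hmv_r : ∀ (v : (Fin n₁ ⊕ Fin n₂) → ℝ) (a : Fin n₂),
      Tstar.mulVec v (Sum.inr a)
        = (q * φ₁ / S₂) * (∑ b, v (Sum.inl b)) + (p * φ₂ / S₂) * (∑ b, v (Sum.inr b)) := by
    intro v a
    have h1 : ∑ b, Tstar (Sum.inr a) (Sum.inl b) * v (Sum.inl b)
        = (q * φ₁ / S₂) * ∑ b, v (Sum.inl b) := by
      rw [Finset.mul_sum]
      exact Finset.sum_congr rfl fun b _ => by rw [hT_rl]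
    have h2 : ∑ b, Tstar (Sum.inr a) (Sum.inr b) * v (Sum.inr b)
        = (p * φ₂ / S₂) * ∑ b, v (Sum.inr b) := by
      rw [Finset.mul_sum]
      exact Finset.sum_congr rfl fun b _ => by rw [hT_rr]
    simp only [Matrix.mulVec, dotProduct, Fintype.sum_sum_type]
    rw [h1, h2]
  have a₀ : Fin n₁ := ⟨0, hn₁⟩
  have b₀ : Fin n₂ := ⟨0, hn₂⟩
  -- 1 is an eigenvalue
  have h1spec : (1:ℝ) ∈ spectrum ℝ Tstar := by
    rw [matrix_mem_spectrum_iff]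
    refine ⟨fun _ => 1, ?_, ?_⟩
    · intro h; have := congrFun h (Sum.inl a₀); simp at this
    · funext i
      rcases i with a | b
      · rw [hmv_l]
        simp only [Finset.sum_const, Finset.card_univ, Fintype.card_fin, nsmul_eq_mul, mul_one,
          Pi.smul_apply, smul_eq_mul]
        linear_combination hA' + hA''
      · rw [hmv_r]
        simp only [Finset.sum_const, Finset.card_univ, Fintype.card_fin, nsmul_eq_mul, mul_one,
          Pi.smul_apply, smul_eq_mul]
        linear_combination hC' + hC''
  -- A - C is an eigenvalue
  have hACspec : A - C ∈ spectrum ℝ Tstar := by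
    rw [matrix_mem_spectrum_iff]
    refine ⟨Sum.elim (fun _ => 1 - A) (fun _ => -C), ?_, ?_⟩
    · intro h; have := congrFun h (Sum.inr b₀); simp at this; exact (ne_of_gt hCpos) this
    · funext i
      rcases i with a | b
      · rw [hmv_l]
        simp only [Sum.elim_inl, Sum.elim_inr, Finset.sum_const, Finset.card_univ,
          Fintype.card_fin, nsmul_eq_mul, Pi.smul_apply, smul_eq_mul]
        linear_combination (1 - A) * hA' + (-C) * hA''
      · rw [hmv_r]
        simp only [Sum.elim_inl, Sum.elim_inr, Finset.sum_const, Finset.card_univ,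
          Fintype.card_fin, nsmul_eq_mul, Pi.smul_apply, smul_eq_mul]
        linear_combination (1 - A) * hC' + (-C) * hC''
  -- every eigenvalue is 0, 1 or A - C
  have hspec_sub : ∀ x ∈ spectrum ℝ Tstar, x = 0 ∨ x = 1 ∨ x = A - C := by
    intro x hx
    by_cases hx0 : x = 0
    · exact Or.inl hx0
    right
    rw [matrix_mem_spectrum_iff] at hx
    obtain ⟨v, hv0, hv⟩ := hx
    set X : ℝ := ∑ b, v (Sum.inl b) with hX
    set Y : ℝ := ∑ b, v (Sum.inr b) with hY
    have hvl : ∀ a, x * v (Sum.inl a) = (p * φ₁ / S₁) * X + (q * φ₂ / S₁) * Y := by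
      intro a
      have := congrFun hv (Sum.inl a)
      rw [hmv_l] at this
      simp only [Pi.smul_apply, smul_eq_mul] at this
      linarith [this]
    have hvr : ∀ b, x * v (Sum.inr b) = (q * φ₁ / S₂) * X + (p * φ₂ / S₂) * Y := by
      intro b
      have := congrFun hv (Sum.inr b)
      rw [hmv_r] at this
      simp only [Pi.smul_apply, smul_eq_mul] at this
      linarith [this]
    -- v is constant on blocks
    set u : ℝ := v (Sum.inl a₀) with hu
    set w : ℝ := v (Sum.inr b₀) with hw
    have hconst_l : ∀ a, v (Sum.inl a) = u := by
      intro a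
      have h1 := hvl a; have h2 := hvl a₀
      have : x * v (Sum.inl a) = x * u := by rw [h1, hu, h2]
      exact mul_left_cancel₀ hx0 this
    have hconst_r : ∀ b, v (Sum.inr b) = w := by
      intro b
      have h1 := hvr b; have h2 := hvr b₀
      have : x * v (Sum.inr b) = x * w := by rw [h1, hw, h2]
      exact mul_left_cancel₀ hx0 this
    have hXu : X = (n₁ : ℝ) * u := by
      rw [hX]; simp [hconst_l]
    have hYw : Y = (n₂ : ℝ) * w := by
      rw [hY]; simp [hconst_r]
    have huw : u ≠ 0 ∨ w ≠ 0 := by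
      by_contra h
      push_neg at h
      apply hv0
      funext i
      rcases i with a | b
      · simp [hconst_l a, h.1]
      · simp [hconst_r b, h.2]
    -- eigen-equations in 2 variables
    have e1 : x * u = A * u + (1 - A) * w := by
      have := hvl a₀
      rw [hXu, hYw, ← hu] at this
      linear_combination this + u * hA' + w * hA''
    have e2 : x * w = C * u + (1 - C) * w := by
      have := hvr b₀
      rw [hXu, hYw, ← hw] at this
      linear_combination this + u * hC' + w * hC''
    by_cases huweq : u = w
    · left
      have hu0 : u ≠ 0 := by
        rcases huw with h | h
        · exact h
        · rw [huweq]; exact h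
      have hxu : x * u = 1 * u := by
        rw [e1, ← huweq]; ring
      exact mul_right_cancel₀ hu0 hxu
    · right
      have hsub : x * (u - w) = (A - C) * (u - w) := by
        linear_combination e1 - e2
      exact mul_right_cancel₀ (sub_ne_zero.mpr huweq) hsub
  -- assemble
  intro μ hμ
  obtain ⟨lam1, hlam1, hmax, hμspec, hμne, hμmax⟩ := hμ
  have habs : |A - C| < 1 := by
    rw [abs_lt]; constructor <;> linarith
  have hlam1_1 : lam1 = 1 := by
    have h1le : 1 ≤ |lam1| := by simpa using hmax 1 h1spec
    rcases hspec_sub lam1 hlam1 with h | h | h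
    · rw [h] at h1le; simp at h1le; linarith
    · exact h
    · rw [h] at h1le; linarith
  have hACne1 : A - C ≠ 1 := by intro h; rw [h] at habs; simp at habs
  have hμval : μ = A - C := by
    rcases hspec_sub μ hμspec with h | h | h
    · exfalso
      have := hμmax (A - C) hACspec (hlam1_1 ▸ hACne1)
      rw [h] at this
      simp at this
      exact hAC (sub_eq_zero.mp this)
    · exact absurd (h.trans hlam1_1.symm) hμne
    · exact h
  rw [hμval, hA, hC]
end

section
/- Consider the Elite–Grassroots model with m ≥ 3 groups of sizes n₁ ≠ n₂ = … = n_m, probabilities 0 < p, q < 1 with p ≠ q, a positive weight function φ, α ∈ ℝ, and T* the degree-weighted learning matrix built from the expected adjacency matrix R. Set d₁* = n₁p + (m−1)n₂q, d₂* = n₁q + n₂p + (m−2)n₂q, φ₁ = φ(α,d₁*), φ₂ = φ(α,d₂*), D₁ = n₁pφ₁ + (m−1)n₂qφ₂ and D₂ = n₁qφ₁ + (n₂p + (m−2)n₂q)φ₂. Then the second-largest-in-magnitude eigenvalue of T* satisfies: |λ₂(T*)| = | n₁pφ₁/D₁ − n₁qφ₁/D₂ | whenever n₁φ₁ ≥ n₂φ₂,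 and |λ₂(T*)| = | n₂(p−q)φ₂/D₂ | whenever n₁φ₁ < n₂φ₂. (When d₁* > d₂* the condition n₁φ₁ ≥ n₂φ₂ is equivalent to α ≥ g⁻¹(n₁/n₂), and when d₁* < d₂* to α ≤ g⁻¹(n₁/n₂), where g(α) = φ₂/φ₁.) -/
lemma mem_spectrum_iff_eig {V : Type*} [Fintype V] [DecidableEq V]
    (M : Matrix V V ℝ) (μ : ℝ) :
    μ ∈ spectrum ℝ M ↔ ∃ v, v ≠ 0 ∧ M.mulVec v = μ • v := by
  rw [spectrum.mem_iff, Matrix.isUnit_iff_isUnit_det, isUnit_iff_ne_zero, not_not,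
    ← Matrix.exists_mulVec_eq_zero_iff]
  constructor
  · rintro ⟨v, hv, h⟩
    refine ⟨v, hv, ?_⟩
    rw [Algebra.algebraMap_eq_smul_one, Matrix.sub_mulVec, Matrix.smul_mulVec,
      Matrix.one_mulVec, sub_eq_zero] at h
    exact h.symm
  · rintro ⟨v, hv, h⟩
    refine ⟨v, hv, ?_⟩
    rw [Algebra.algebraMap_eq_smul_one, Matrix.sub_mulVec, Matrix.smul_mulVec,
      Matrix.one_mulVec, sub_eq_zero, h]

lemma sum_sigma_const_card {m : ℕ} (sz : Fin m → ℕ) (f : Fin m → ℝ) :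
    ∑ j : (k : Fin m) × Fin (sz k), f j.1 = ∑ k : Fin m, (sz k : ℝ) * f k := by
  rw [← Finset.univ_sigma_univ, Finset.sum_sigma]
  simp [Finset.sum_const, mul_comm]

lemma sum_ite_two {m : ℕ} (g : Fin m) (A B : ℝ) :
    ∑ k : Fin m, (if k = g then A else B) = A + ((m:ℝ) - 1) * B := by
  have h : ∀ k : Fin m, (if k = g then A else B) = B + (if k = g then A - B else 0) := by
    intro k; split_ifs <;> ring
  simp_rw [h, Finset.sum_add_distrib, Finset.sum_const, Finset.sum_ite_eq',
    Finset.mem_univ, if_pos, Finset.card_univ, Fintype.card_fin, nsmul_eq_mul]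
  have : 1 ≤ m := Fin.pos g
  have : (1:ℝ) ≤ m := by exact_mod_cast this
  ring

lemma sum_ite_three {m : ℕ} (g₁ g₂ : Fin m) (hg : g₁ ≠ g₂) (A B C : ℝ) :
    ∑ k : Fin m, (if k = g₁ then A else if k = g₂ then B else C)
      = A + B + ((m:ℝ) - 2) * C := by
  have h : ∀ k : Fin m, (if k = g₁ then A else if k = g₂ then B else C)
      = C + ((if k = g₁ then A - C else 0) + (if k = g₂ then B - C else 0)) := by
    intro k
    split_ifs with h1 h2 h2 <;> try ring
    exact absurd (h1.symm.trans h2) hg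
  simp_rw [h, Finset.sum_add_distrib, Finset.sum_const, Finset.sum_ite_eq',
    Finset.mem_univ, if_pos, Finset.card_univ, Fintype.card_fin, nsmul_eq_mul]
  ring

set_option maxHeartbeats 2000000

/-- in the Elite–Grassroots model with `m ≥ 3` groups (group `0` of size
`n₁`, the other `m−1` groups of size `n₂ ≠ n₁`), the second-largest-in-magnitude
eigenvalue of `T*` equals `|n₁pφ₁/D₁ − n₁qφ₁/D₂|` when `n₁φ₁ ≥ n₂φ₂` and
`|n₂(p−q)φ₂/D₂|` when `n₁φ₁ < n₂φ₂`. -/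
theorem elite_grassroots_many_groups_lambda2
    (m : ℕ) (hm : 3 ≤ m)
    (n₁ n₂ : ℕ) (hn₁ : 0 < n₁) (hn₂ : 0 < n₂) (hne : n₁ ≠ n₂)
    (p q : ℝ) (hp : 0 < p) (hp1 : p < 1) (hq : 0 < q) (hq1 : q < 1) (hpq : p ≠ q)
    (φ : ℝ → ℝ → ℝ) (hφpos : ∀ a d : ℝ, 0 ≤ d → 0 < φ a d) (α : ℝ)
    (R : Matrix ((k : Fin m) × Fin (if (k : ℕ) = 0 then n₁ else n₂))
                ((k : Fin m) × Fin (if (k : ℕ) = 0 then n₁ else n₂)) ℝ)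
    (hR : ∀ i j, R i j = if i.1 = j.1 then p else q)
    (degR : ((k : Fin m) × Fin (if (k : ℕ) = 0 then n₁ else n₂)) → ℝ)
    (hdegR : ∀ i, degR i = ∑ j, R i j)
    (Tstar : Matrix ((k : Fin m) × Fin (if (k : ℕ) = 0 then n₁ else n₂))
                    ((k : Fin m) × Fin (if (k : ℕ) = 0 then n₁ else n₂)) ℝ)
    (hT : ∀ i j, Tstar i j = R i j * φ α (degR j) / ∑ k, R i k * φ α (degR k))
    (d₁star d₂star φ₁ φ₂ D₁ D₂ : ℝ)
    (hd₁ : d₁star = (n₁ : ℝ) * p + ((m : ℝ) - 1) * (n₂ : ℝ) * q)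
    (hd₂ : d₂star = (n₁ : ℝ) * q + (n₂ : ℝ) * p + ((m : ℝ) - 2) * (n₂ : ℝ) * q)
    (hφ₁ : φ₁ = φ α d₁star) (hφ₂ : φ₂ = φ α d₂star)
    (hD₁ : D₁ = (n₁ : ℝ) * p * φ₁ + ((m : ℝ) - 1) * (n₂ : ℝ) * q * φ₂)
    (hD₂ : D₂ = (n₁ : ℝ) * q * φ₁ + ((n₂ : ℝ) * p + ((m : ℝ) - 2) * (n₂ : ℝ) * q) * φ₂) :
    ∀ μ : ℝ, IsSecondMagEig Tstar μ →
      (((n₂ : ℝ) * φ₂ ≤ (n₁ : ℝ) * φ₁ →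
        |μ| = |(n₁ : ℝ) * p * φ₁ / D₁ - (n₁ : ℝ) * q * φ₁ / D₂|) ∧
       ((n₁ : ℝ) * φ₁ < (n₂ : ℝ) * φ₂ →
        |μ| = |(n₂ : ℝ) * (p - q) * φ₂ / D₂|)) := by
  intro μ hμ
  haveI : NeZero m := ⟨by omega⟩
  have hm1 : (3:ℝ) ≤ (m:ℝ) := by exact_mod_cast hm
  have hn₁R : (0:ℝ) < n₁ := by exact_mod_cast hn₁
  have hn₂R : (0:ℝ) < n₂ := by exact_mod_cast hn₂
  -- positivity of the basic quantities
  have hmm1 : (0:ℝ) < (m:ℝ) - 1 := by linarith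
  have hmm2 : (0:ℝ) < (m:ℝ) - 2 := by linarith
  have hd₁nn : 0 ≤ d₁star := by
    rw [hd₁]; linarith [mul_pos hn₁R hp, mul_pos (mul_pos hmm1 hn₂R) hq]
  have hd₂nn : 0 ≤ d₂star := by
    rw [hd₂]; linarith [mul_pos hn₁R hq, mul_pos hn₂R hp, mul_pos (mul_pos hmm2 hn₂R) hq]
  have hφ₁pos : 0 < φ₁ := hφ₁ ▸ hφpos α d₁star hd₁nn
  have hφ₂pos : 0 < φ₂ := hφ₂ ▸ hφpos α d₂star hd₂nn
  have P1 : 0 < (n₁:ℝ)*p*φ₁ := by positivity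
  have P2 : 0 < (n₂:ℝ)*q*φ₂ := by positivity
  have P3 : 0 < (n₂:ℝ)*p*φ₂ := by positivity
  have P4 : 0 < (n₁:ℝ)*q*φ₁ := by positivity
  have hD₁pos : 0 < D₁ := by rw [hD₁]; linarith [mul_pos hmm1 P2, P1]
  have hD₂pos : 0 < D₂ := by rw [hD₂]; linarith [P4, mul_pos (add_pos (mul_pos hn₂R hp) (mul_pos (mul_pos hmm2 hn₂R) hq)) hφ₂pos]
  -- index infrastructure
  have hcond : ∀ k : Fin m, ((k:ℕ) = 0) = (k = 0) := fun k => by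
    rw [← Fin.val_zero m]
    exact propext ⟨fun h => Fin.ext h, fun h => congrArg Fin.val h⟩
  have hszpos : ∀ k : Fin m, 0 < (if (k:ℕ) = 0 then n₁ else n₂) := by
    intro k; split_ifs <;> assumption
  have hcast : ∀ k : Fin m, (((if (k:ℕ) = 0 then n₁ else n₂) : ℕ) : ℝ)
      = if k = 0 then (n₁:ℝ) else (n₂:ℝ) := by
    intro k; simp only [hcond]; split_ifs <;> rfl
  -- degrees
  have hdeg : ∀ i : (k : Fin m) × Fin (if (k : ℕ) = 0 then n₁ else n₂),
      degR i = if i.1 = 0 then d₁star else d₂star := by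
    intro i
    rw [hdegR]
    have step1 : ∑ j : (k : Fin m) × Fin (if (k : ℕ) = 0 then n₁ else n₂), R i j
        = ∑ k : Fin m, (((if (k:ℕ) = 0 then n₁ else n₂) : ℕ) : ℝ) * (if i.1 = k then p else q) := by
      rw [Finset.sum_congr rfl (fun j _ => hR i j)]
      exact sum_sigma_const_card (fun k => if (k:ℕ) = 0 then n₁ else n₂)
        (fun k => if i.1 = k then p else q)
    rw [step1]
    simp only [hcast]
    rcases eq_or_ne i.1 0 with h0 | h0
    · rw [if_pos h0]
      have point : ∀ k : Fin m, (if k = 0 then (n₁:ℝ) else (n₂:ℝ)) * (if i.1 = k then p else q)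
          = if k = 0 then (n₁:ℝ)*p else (n₂:ℝ)*q := by
        intro k
        rcases eq_or_ne k 0 with rfl | hk
        · rw [if_pos rfl, if_pos rfl, if_pos h0]
        · rw [if_neg hk, if_neg hk, if_neg (fun h : i.1 = k => hk (h.symm.trans h0))]
      rw [Finset.sum_congr rfl (fun k _ => point k), sum_ite_two 0 _ _, hd₁]
      ring
    · rw [if_neg h0]
      have point : ∀ k : Fin m, (if k = 0 then (n₁:ℝ) else (n₂:ℝ)) * (if i.1 = k then p else q)
          = if k = 0 then (n₁:ℝ)*q else if k = i.1 then (n₂:ℝ)*p else (n₂:ℝ)*q := by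
        intro k
        rcases eq_or_ne k 0 with rfl | hk
        · rw [if_pos rfl, if_pos rfl, if_neg (fun h : i.1 = 0 => h0 h)]
        · rw [if_neg hk, if_neg hk]
          rcases eq_or_ne k i.1 with rfl | hki
          · rw [if_pos rfl, if_pos rfl]
          · rw [if_neg hki, if_neg (fun h : i.1 = k => hki h.symm)]
      rw [Finset.sum_congr rfl (fun k _ => point k),
        sum_ite_three 0 i.1 (Ne.symm h0) _ _ _, hd₂]
      ring
  -- the value of φ on degrees, and row normalizers
  have hφdeg : ∀ j : (k : Fin m) × Fin (if (k : ℕ) = 0 then n₁ else n₂),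
      φ α (degR j) = if j.1 = 0 then φ₁ else φ₂ := by
    intro j; rw [hdeg j]
    split_ifs
    · exact hφ₁.symm
    · exact hφ₂.symm
  have hS : ∀ i : (k : Fin m) × Fin (if (k : ℕ) = 0 then n₁ else n₂),
      (∑ k, R i k * φ α (degR k)) = if i.1 = 0 then D₁ else D₂ := by
    intro i
    have step1 : (∑ k : (k : Fin m) × Fin (if (k : ℕ) = 0 then n₁ else n₂), R i k * φ α (degR k))
        = ∑ k : Fin m, (((if (k:ℕ) = 0 then n₁ else n₂) : ℕ) : ℝ)
            * ((if i.1 = k then p else q) * (if k = 0 then φ₁ else φ₂)) := by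
      rw [Finset.sum_congr rfl (fun j _ => by rw [hR i j, hφdeg j])]
      exact sum_sigma_const_card (fun k => if (k:ℕ) = 0 then n₁ else n₂)
        (fun k => (if i.1 = k then p else q) * (if k = 0 then φ₁ else φ₂))
    rw [step1]
    simp only [hcast]
    rcases eq_or_ne i.1 0 with h0 | h0
    · rw [if_pos h0]
      have point : ∀ k : Fin m, (if k = 0 then (n₁:ℝ) else (n₂:ℝ))
            * ((if i.1 = k then p else q) * (if k = 0 then φ₁ else φ₂))
          = if k = 0 then (n₁:ℝ)*p*φ₁ else (n₂:ℝ)*q*φ₂ := by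
        intro k
        rcases eq_or_ne k 0 with rfl | hk
        · rw [if_pos rfl, if_pos rfl, if_pos rfl, if_pos h0]; ring
        · rw [if_neg hk, if_neg hk, if_neg hk,
            if_neg (fun h : i.1 = k => hk (h.symm.trans h0))]; ring
      rw [Finset.sum_congr rfl (fun k _ => point k), sum_ite_two 0 _ _, hD₁]
      ring
    · rw [if_neg h0]
      have point : ∀ k : Fin m, (if k = 0 then (n₁:ℝ) else (n₂:ℝ))
            * ((if i.1 = k then p else q) * (if k = 0 then φ₁ else φ₂))
          = if k = 0 then (n₁:ℝ)*q*φ₁ else if k = i.1 then (n₂:ℝ)*p*φ₂ else (n₂:ℝ)*q*φ₂ := by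
        intro k
        rcases eq_or_ne k 0 with rfl | hk
        · rw [if_pos rfl, if_pos rfl, if_pos rfl, if_neg (fun h : i.1 = 0 => h0 h)]; ring
        · rw [if_neg hk, if_neg hk, if_neg hk]
          rcases eq_or_ne k i.1 with rfl | hki
          · rw [if_pos rfl, if_pos rfl]; ring
          · rw [if_neg hki, if_neg (fun h : i.1 = k => hki h.symm)]; ring
      rw [Finset.sum_congr rfl (fun k _ => point k),
        sum_ite_three 0 i.1 (Ne.symm h0) _ _ _, hD₂]
      ring
  have hT' : ∀ i j : (k : Fin m) × Fin (if (k : ℕ) = 0 then n₁ else n₂),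
      Tstar i j = (if i.1 = j.1 then p else q) * (if j.1 = 0 then φ₁ else φ₂)
        / (if i.1 = 0 then D₁ else D₂) := by
    intro i j; rw [hT, hR, hφdeg, hS]
  -- abbreviations
  obtain ⟨a, ha⟩ : ∃ x : ℝ, x = (n₁:ℝ)*p*φ₁/D₁ := ⟨_, rfl⟩
  obtain ⟨b, hb⟩ : ∃ x : ℝ, x = (n₂:ℝ)*q*φ₂/D₁ := ⟨_, rfl⟩
  obtain ⟨c, hc⟩ : ∃ x : ℝ, x = (n₁:ℝ)*q*φ₁/D₂ := ⟨_, rfl⟩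
  obtain ⟨d, hd⟩ : ∃ x : ℝ, x = (n₂:ℝ)*p*φ₂/D₂ := ⟨_, rfl⟩
  obtain ⟨ee, hee⟩ : ∃ x : ℝ, x = (n₂:ℝ)*q*φ₂/D₂ := ⟨_, rfl⟩
  have hapos : 0 < a := by rw [ha]; positivity
  have hbpos : 0 < b := by rw [hb]; positivity
  have hcpos : 0 < c := by rw [hc]; positivity
  have hdpos : 0 < d := by rw [hd]; positivity
  have heepos : 0 < ee := by rw [hee]; positivity
  have h1 : a + ((m:ℝ) - 1) * b = 1 := by
    rw [ha, hb]; field_simp; rw [hD₁]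
  have h2 : c + d + ((m:ℝ) - 2) * ee = 1 := by
    rw [hc, hd, hee]; field_simp; rw [hD₂]; ring
  -- the master mulVec formula for group-constant vectors
  have hmul : ∀ (w : Fin m → ℝ) (i : (k : Fin m) × Fin (if (k : ℕ) = 0 then n₁ else n₂)),
      Tstar.mulVec (fun j => w j.1) i =
        if i.1 = 0 then b * (∑ k, w k) + (a - b) * w 0
        else ee * (∑ k, w k) + (c - ee) * w 0 + (d - ee) * w i.1 := by
    intro w i
    have step0 : Tstar.mulVec (fun j => w j.1) i
        = ∑ j : (k : Fin m) × Fin (if (k : ℕ) = 0 then n₁ else n₂), Tstar i j * w j.1 := rfl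
    have step1 : Tstar.mulVec (fun j => w j.1) i
        = ∑ k : Fin m, (((if (k:ℕ) = 0 then n₁ else n₂) : ℕ) : ℝ)
            * ((if i.1 = k then p else q) * (if k = 0 then φ₁ else φ₂)
               / (if i.1 = 0 then D₁ else D₂) * w k) := by
      rw [step0, Finset.sum_congr rfl (fun j _ => by rw [hT' i j])]
      exact sum_sigma_const_card (fun k => if (k:ℕ) = 0 then n₁ else n₂)
        (fun k => (if i.1 = k then p else q) * (if k = 0 then φ₁ else φ₂)
          / (if i.1 = 0 then D₁ else D₂) * w k)
    rw [step1]
    simp only [hcast]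
    rcases eq_or_ne i.1 0 with h0 | h0
    · rw [if_pos h0, if_pos h0]
      have point : ∀ k : Fin m, (if k = 0 then (n₁:ℝ) else (n₂:ℝ))
            * ((if i.1 = k then p else q) * (if k = 0 then φ₁ else φ₂)
               / D₁ * w k)
          = b * w k + (if k = 0 then (a - b) * w k else 0) := by
        intro k
        rcases eq_or_ne k 0 with rfl | hk
        · rw [if_pos rfl, if_pos rfl, if_pos rfl, if_pos h0, ha, hb]; ring
        · rw [if_neg hk, if_neg hk, if_neg hk,
            if_neg (fun h : i.1 = k => hk (h.symm.trans h0)), hb]; ring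
      rw [Finset.sum_congr rfl (fun k _ => point k), Finset.sum_add_distrib,
        ← Finset.mul_sum, Finset.sum_ite_eq' Finset.univ (0 : Fin m) (fun k => (a - b) * w k),
        if_pos (Finset.mem_univ _)]
    · rw [if_neg h0, if_neg h0]
      have point : ∀ k : Fin m, (if k = 0 then (n₁:ℝ) else (n₂:ℝ))
            * ((if i.1 = k then p else q) * (if k = 0 then φ₁ else φ₂)
               / D₂ * w k)
          = ee * w k + ((if k = 0 then (c - ee) * w k else 0)
              + (if k = i.1 then (d - ee) * w k else 0)) := by
        intro k
        rcases eq_or_ne k 0 with rfl | hk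
        · rw [if_pos rfl, if_pos rfl, if_pos rfl,
            if_neg (fun h : (0:Fin m) = i.1 => h0 h.symm),
            if_neg (fun h : i.1 = 0 => h0 h), hc, hee]; ring
        · rw [if_neg hk, if_neg hk, if_neg hk]
          rcases eq_or_ne k i.1 with rfl | hki
          · rw [if_pos rfl, if_pos rfl, hd, hee]; ring
          · rw [if_neg hki, if_neg (fun h : i.1 = k => hki h.symm), hee]; ring
      rw [Finset.sum_congr rfl (fun k _ => point k), Finset.sum_add_distrib,
        Finset.sum_add_distrib, ← Finset.mul_sum,
        Finset.sum_ite_eq' Finset.univ (0 : Fin m) (fun k => (c - ee) * w k),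
        Finset.sum_ite_eq' Finset.univ (i.1 : Fin m) (fun k => (d - ee) * w k),
        if_pos (Finset.mem_univ _), if_pos (Finset.mem_univ _)]
      ring
  -- group representatives
  have hrepmk : ∀ g : Fin m, ((⟨g, ⟨0, hszpos g⟩⟩ :
      (k : Fin m) × Fin (if (k : ℕ) = 0 then n₁ else n₂)).1 = g) := fun g => rfl
  -- eigenvalue 1
  have spec1 : (1:ℝ) ∈ spectrum ℝ Tstar := by
    rw [mem_spectrum_iff_eig]
    refine ⟨(fun j => (fun _ : Fin m => (1:ℝ)) j.1), ?_, ?_⟩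
    · intro h
      have := congrFun h ⟨0, ⟨0, hszpos 0⟩⟩
      simp at this
    · funext i
      rw [hmul (fun _ : Fin m => (1:ℝ)) i]
      have hU : ∑ _k : Fin m, (1:ℝ) = (m:ℝ) := by simp
      rw [hU]
      simp only [Pi.smul_apply, smul_eq_mul, one_mul]
      split_ifs with h0
      · linear_combination h1
      · linear_combination h2
  -- eigenvalue d - ee  (= λ_b)
  obtain ⟨g₁, hg₁0, g₂, hg₂0, hg₁₂⟩ :
      ∃ g₁ : Fin m, g₁ ≠ 0 ∧ ∃ g₂ : Fin m, g₂ ≠ 0 ∧ g₁ ≠ g₂ := by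
    refine ⟨⟨1, by omega⟩, ?_, ⟨2, by omega⟩, ?_, ?_⟩ <;>
      simp [Fin.ext_iff, Fin.val_zero]
  have spec_lb : (d - ee) ∈ spectrum ℝ Tstar := by
    rw [mem_spectrum_iff_eig]
    set w : Fin m → ℝ := fun k => if k = g₁ then 1 else if k = g₂ then -1 else 0 with hw
    have hw0 : w 0 = 0 := by
      rw [hw]; simp only [if_neg (Ne.symm hg₁0), if_neg (Ne.symm hg₂0)]
    have hwg₁ : w g₁ = 1 := by simp [hw]
    have hU : ∑ k, w k = 0 := by
      rw [hw, sum_ite_three g₁ g₂ hg₁₂ 1 (-1) 0]; ring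
    refine ⟨(fun j => w j.1), ?_, ?_⟩
    · intro h
      have := congrFun h ⟨g₁, ⟨0, hszpos g₁⟩⟩
      rw [Pi.zero_apply] at this
      rw [hrepmk g₁] at this
      rw [hwg₁] at this
      exact one_ne_zero this
    · funext i
      rw [hmul w i, hU]
      simp only [Pi.smul_apply, smul_eq_mul]
      split_ifs with h0
      · rw [h0, hw0]; ring
      · rw [hw0]; ring
  -- eigenvalue a - c  (= λ_a)
  have spec_la : (a - c) ∈ spectrum ℝ Tstar := by
    rw [mem_spectrum_iff_eig]
    set w : Fin m → ℝ := fun k => if k = 0 then ((m:ℝ)-1)*b else -c with hw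
    have hw0 : w 0 = ((m:ℝ)-1)*b := by simp [hw]
    have hwg : ∀ g : Fin m, g ≠ 0 → w g = -c := by
      intro g hg; rw [hw]; simp only [if_neg hg]
    have hU : ∑ k, w k = ((m:ℝ)-1)*b + ((m:ℝ)-1)*(-c) := by
      rw [hw, sum_ite_two 0 _ _]
    refine ⟨(fun j => w j.1), ?_, ?_⟩
    · intro h
      have h2' := congrFun h ⟨0, ⟨0, hszpos 0⟩⟩
      rw [Pi.zero_apply] at h2'
      rw [hrepmk 0, hw0] at h2'
      exact (mul_pos hmm1 hbpos).ne' h2'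
    · funext i
      rw [hmul w i, hU]
      simp only [Pi.smul_apply, smul_eq_mul]
      split_ifs with h0
      · rw [h0, hw0]; ring
      · rw [hw0, hwg i.1 h0]; linear_combination c*h1 - c*h2
  -- classification of the spectrum
  have hclass : ∀ x, x ∈ spectrum ℝ Tstar → x = 0 ∨ x = 1 ∨ x = a - c ∨ x = d - ee := by
    intro x hx
    rcases eq_or_ne x 0 with rfl | hx0
    · left; rfl
    right
    rw [mem_spectrum_iff_eig] at hx
    obtain ⟨v, hvne, hveq⟩ := hx
    have hmulrow : ∀ i : (k : Fin m) × Fin (if (k : ℕ) = 0 then n₁ else n₂),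
        Tstar.mulVec v i = ∑ j : (k : Fin m) × Fin (if (k : ℕ) = 0 then n₁ else n₂),
          ((if i.1 = j.1 then p else q) * (if j.1 = 0 then φ₁ else φ₂)
            / (if i.1 = 0 then D₁ else D₂)) * v j := by
      intro i
      rw [show Tstar.mulVec v i
          = ∑ j : (k : Fin m) × Fin (if (k : ℕ) = 0 then n₁ else n₂), Tstar i j * v j from rfl]
      exact Finset.sum_congr rfl (fun j _ => by rw [hT' i j])
    have hgrp : ∀ i : (k : Fin m) × Fin (if (k : ℕ) = 0 then n₁ else n₂),
        Tstar.mulVec v i = Tstar.mulVec v ⟨i.1, ⟨0, hszpos i.1⟩⟩ := by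
      intro i
      rw [hmulrow i, hmulrow ⟨i.1, ⟨0, hszpos i.1⟩⟩]
    set u : Fin m → ℝ := fun k => Tstar.mulVec v ⟨k, ⟨0, hszpos k⟩⟩ / x with hu
    have hveq' : ∀ i, v i = u i.1 := by
      intro i
      have h := congrFun hveq i
      rw [Pi.smul_apply, smul_eq_mul] at h
      rw [hgrp i] at h
      rw [hu]
      simp only
      rw [h]
      exact (mul_div_cancel_left₀ (v i) hx0).symm
    have hvu : v = fun j => u j.1 := funext hveq'
    have hueq : ∀ g : Fin m,
        (if g = 0 then b * (∑ k, u k) + (a-b) * u 0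
         else ee * (∑ k, u k) + (c-ee) * u 0 + (d-ee) * u g) = x * u g := by
      intro g
      have h := congrFun hveq ⟨g, ⟨0, hszpos g⟩⟩
      rw [hvu] at h
      rw [hmul u ⟨g, ⟨0, hszpos g⟩⟩] at h
      simpa using h
    have hune : ∃ g, u g ≠ 0 := by
      by_contra hco; push_neg at hco
      exact hvne (funext fun i => by rw [hveq' i, hco]; rfl)
    rcases eq_or_ne x (d - ee) with h | hxlb
    · right; right; exact h
    have hy : ∀ g : Fin m, g ≠ 0 → u g = u g₁ := by
      intro g hg
      have e1 := hueq g; rw [if_neg hg] at e1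
      have e2 := hueq g₁; rw [if_neg hg₁0] at e2
      have heq : (x - (d - ee)) * u g = (x - (d - ee)) * u g₁ := by
        linear_combination e2 - e1
      exact mul_left_cancel₀ (sub_ne_zero.mpr hxlb) heq
    have hU : ∑ k, u k = u 0 + ((m:ℝ)-1) * u g₁ := by
      calc ∑ k, u k = ∑ k, (if k = 0 then u 0 else u g₁) :=
            Finset.sum_congr rfl (fun k _ => by
              rcases eq_or_ne k 0 with rfl | hk
              · rw [if_pos rfl]
              · rw [if_neg hk, hy k hk])
        _ = u 0 + ((m:ℝ)-1) * u g₁ := sum_ite_two 0 _ _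
    have e1 := hueq 0; rw [if_pos rfl, hU] at e1
    have e2 := hueq g₁; rw [if_neg hg₁0, hU] at e2
    have hyne : u g₁ ≠ 0 := by
      intro h
      have e2' := e2
      rw [h] at e2'
      have hcu : c * u 0 = 0 := by linear_combination e2'
      have hu0 : u 0 = 0 := (mul_eq_zero.mp hcu).resolve_left hcpos.ne'
      obtain ⟨g, hg⟩ := hune
      rcases eq_or_ne g 0 with rfl | hgz
      · exact hg hu0
      · exact hg (by rw [hy g hgz, h])
    have hu0ne : u 0 ≠ 0 := by
      intro h
      have e1' := e1
      rw [h] at e1'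
      have hby : (((m:ℝ)-1) * b) * u g₁ = 0 := by linear_combination e1'
      exact hyne ((mul_eq_zero.mp hby).resolve_left (mul_pos hmm1 hbpos).ne')
    have E1 : (x - a) * u 0 = ((m:ℝ)-1) * b * u g₁ := by linear_combination -e1
    have E2 : (x - (d + ((m:ℝ)-2)*ee)) * u g₁ = c * u 0 := by linear_combination -e2
    have key : (x - a) * (x - (d + ((m:ℝ)-2)*ee)) * (u 0 * u g₁)
        = (((m:ℝ)-1) * b * c) * (u 0 * u g₁) := by
      calc (x - a) * (x - (d + ((m:ℝ)-2)*ee)) * (u 0 * u g₁)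
          = ((x - a) * u 0) * ((x - (d + ((m:ℝ)-2)*ee)) * u g₁) := by ring
        _ = (((m:ℝ)-1) * b * u g₁) * (c * u 0) := by rw [E1, E2]
        _ = (((m:ℝ)-1) * b * c) * (u 0 * u g₁) := by ring
    have key2 : (x - a) * (x - (d + ((m:ℝ)-2)*ee)) = ((m:ℝ)-1) * b * c :=
      mul_right_cancel₀ (mul_ne_zero hu0ne hyne) key
    have hfac : (x - 1) * (x - (a - c)) = 0 := by
      linear_combination key2 + (x - a) * h2 + c * h1
    rcases mul_eq_zero.mp hfac with h | h
    · left; linarith [sub_eq_zero.mp h]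
    · right; left; exact sub_eq_zero.mp h
  -- magnitude facts
  have ha1 : a < 1 := by linarith [mul_pos hmm1 hbpos]
  have hc1 : c < 1 := by linarith [mul_pos hmm2 heepos, hdpos]
  have hd1 : d < 1 := by linarith [mul_pos hmm2 heepos, hcpos]
  have hee1 : ee < 1 := by
    linarith [mul_nonneg (by linarith : (0:ℝ) ≤ (m:ℝ)-3) heepos.le, hcpos, hdpos]
  have hla_lt : |a - c| < 1 := abs_lt.mpr ⟨by linarith, by linarith⟩
  have hlb_lt : |d - ee| < 1 := abs_lt.mpr ⟨by linarith, by linarith⟩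
  have hgb : (n₂:ℝ)*(p-q)*φ₂/D₂ = d - ee := by rw [hd, hee]; ring
  have hlbne : d - ee ≠ 0 := by
    rw [← hgb]
    exact div_ne_zero
      (mul_ne_zero (mul_ne_zero hn₂R.ne' (sub_ne_zero.mpr hpq)) hφ₂pos.ne') hD₂pos.ne'
  have hKq : 0 < p + ((m:ℝ)-1)*q := by linarith [mul_pos hmm1 hq]
  have hKpos : 0 < (n₁:ℝ)*φ₁*(p + ((m:ℝ)-1)*q) := by positivity
  have hA1 : (n₁:ℝ) * p * φ₁ + ((m:ℝ) - 1) * (n₂:ℝ) * q * φ₂ ≠ 0 := hD₁ ▸ hD₁pos.ne'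
  have hA2 : (n₁:ℝ) * q * φ₁ + ((n₂:ℝ) * p + ((m:ℝ) - 2) * (n₂:ℝ) * q) * φ₂ ≠ 0 :=
    hD₂ ▸ hD₂pos.ne'
  have hrel : (a - c) * D₁ = (d - ee) * ((n₁:ℝ) * φ₁ * (p + ((m:ℝ)-1)*q)) := by
    rw [ha, hc, hd, hee, hD₁, hD₂]
    field_simp
    ring
  have habs : |a - c| * D₁ = |d - ee| * ((n₁:ℝ)*φ₁*(p + ((m:ℝ)-1)*q)) := by
    calc |a - c| * D₁ = |(a - c) * D₁| := by rw [abs_mul, abs_of_pos hD₁pos]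
      _ = |(d - ee) * ((n₁:ℝ)*φ₁*(p + ((m:ℝ)-1)*q))| := by rw [hrel]
      _ = |d - ee| * ((n₁:ℝ)*φ₁*(p + ((m:ℝ)-1)*q)) := by rw [abs_mul, abs_of_pos hKpos]
  have hlane : a - c ≠ 0 := by
    intro h
    rw [h, zero_mul] at hrel
    exact hlbne ((mul_eq_zero.mp hrel.symm).resolve_right hKpos.ne')
  have hla1 : a - c ≠ 1 := by
    intro h; rw [h] at hla_lt; simp at hla_lt
  have hlb1 : d - ee ≠ 1 := by
    intro h; rw [h] at hlb_lt; simp at hlb_lt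
  -- identify the leading eigenvalue
  obtain ⟨lam1, hl1mem, hl1max, hμmem, hμne, hμmax⟩ := hμ
  have hlam1 : lam1 = 1 := by
    have h1le := hl1max 1 spec1
    rcases hclass lam1 hl1mem with h | h | h | h
    · exfalso; rw [h] at h1le; rw [abs_zero, abs_one] at h1le; linarith
    · exact h
    · exfalso; rw [h] at h1le; rw [abs_one] at h1le; linarith
    · exfalso; rw [h] at h1le; rw [abs_one] at h1le; linarith
  constructor
  · intro hcase
    have hga : (n₁:ℝ) * p * φ₁ / D₁ - (n₁:ℝ) * q * φ₁ / D₂ = a - c := by rw [ha, hc]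
    rw [hga]
    have hDK : D₁ ≤ (n₁:ℝ)*φ₁*(p + ((m:ℝ)-1)*q) := by
      rw [hD₁]
      linarith [mul_nonneg (mul_pos hmm1 hq).le (by linarith : (0:ℝ) ≤ (n₁:ℝ)*φ₁ - (n₂:ℝ)*φ₂)]
    have hcmp : |d - ee| ≤ |a - c| := by
      have h' : |d - ee| * D₁ ≤ |a - c| * D₁ := by
        calc |d - ee| * D₁ ≤ |d - ee| * ((n₁:ℝ)*φ₁*(p + ((m:ℝ)-1)*q)) :=
              mul_le_mul_of_nonneg_left hDK (abs_nonneg _)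
          _ = |a - c| * D₁ := habs.symm
      exact le_of_mul_le_mul_right h' hD₁pos
    apply le_antisymm
    · rcases hclass μ hμmem with h | h | h | h
      · rw [h, abs_zero]; exact abs_nonneg _
      · exact absurd (h.trans hlam1.symm) hμne
      · rw [h]
      · rw [h]; exact hcmp
    · exact hμmax _ spec_la (by rw [hlam1]; exact hla1)
  · intro hcase
    rw [hgb]
    have hKD : (n₁:ℝ)*φ₁*(p + ((m:ℝ)-1)*q) ≤ D₁ := by
      rw [hD₁]
      linarith [mul_nonneg (mul_pos hmm1 hq).le (by linarith : (0:ℝ) ≤ (n₂:ℝ)*φ₂ - (n₁:ℝ)*φ₁)]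
    have hcmp : |a - c| ≤ |d - ee| := by
      have h' : |a - c| * D₁ ≤ |d - ee| * D₁ := by
        rw [habs]
        exact mul_le_mul_of_nonneg_left hKD (abs_nonneg _)
      exact le_of_mul_le_mul_right h' hD₁pos
    apply le_antisymm
    · rcases hclass μ hμmem with h | h | h | h
      · rw [h, abs_zero]; exact abs_nonneg _
      · exact absurd (h.trans hlam1.symm) hμne
      · rw [h]; exact hcmp
      · rw [h]
    · exact hμmax _ spec_lb (by rw [hlam1]; exact hlb1)
end

section
/- Consider the Elite–Grassroots model with m ≥ 2 groups of sizes n₁ ≠ n₂ = … = n_m, probabilities 0 < p, q < 1 with p ≠ q, and a positive weight function φ satisfying Properties 1–2, α ∈ ℝ. Let T*(α) be the degree-weighted learning matrix built from the expected adjacency matrix, and let g(α) = φ(α,d₂*)/φ(α,d₁*), which is strictly monotone with inverse g⁻¹ defined on (0,∞). Then the function α ↦ |λ₂(T*(α))| is monotonically decreasing on D_α and monotonically increasing on ℝ ∖ D_α, where: (i) if m = 2, D_α = [g⁻¹(n₁/n₂), ∞); (ii) if m ≥ 3 and d₁* > d₂*, D_α = (−∞, g⁻¹(n₁/n₂)]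 ∪ [g⁻¹((n₁/n₂)·(p/((m−1)(p+(m−2)q)))^{1/2}), ∞); (iii) if m ≥ 3 and d₁* < d₂*, D_α = ( g⁻¹((n₁/n₂)·(p/((m−1)(p+(m−2)q)))^{1/2}), g⁻¹(n₁/n₂) ]. -/
open Filter
open Matrix


section AuxLemmas

lemma sigma_sum {m : ℕ} (n : Fin m → ℕ) (f : Fin m → ℝ) :
    ∑ j : (k : Fin m) × Fin (n k), f j.1 = ∑ k, (n k : ℝ) * f k := by
  rw [← Finset.univ_sigma_univ, Finset.sum_sigma]
  simp [mul_comm]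

lemma lift_mulVec {m : ℕ} {n : Fin m → ℕ}
    (M : Matrix ((k : Fin m) × Fin (n k)) ((k : Fin m) × Fin (n k)) ℝ)
    (cc : Fin m → Fin m → ℝ) (hM : ∀ i j, M i j = cc i.1 j.1)
    (u : Fin m → ℝ) (i : (k : Fin m) × Fin (n k)) :
    (M *ᵥ fun j => u j.1) i = ∑ l, (n l : ℝ) * cc i.1 l * u l := by
  show ∑ j : (k : Fin m) × Fin (n k), M i j * u j.1 = _
  have h : ∀ j : (k : Fin m) × Fin (n k), M i j * u j.1 = (fun l => cc i.1 l * u l) j.1 := by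
    intro j; rw [hM]
  rw [Finset.sum_congr rfl (fun j _ => h j), sigma_sum n (fun l => cc i.1 l * u l)]
  exact Finset.sum_congr rfl fun l _ => by ring

lemma algebraMap_mulVec {V : Type*} [Fintype V] [DecidableEq V] (μ : ℝ) (v : V → ℝ) :
    (algebraMap ℝ (Matrix V V ℝ) μ) *ᵥ v = μ • v := by
  rw [Algebra.algebraMap_eq_smul_one, Matrix.smul_mulVec, Matrix.one_mulVec]

lemma spec_mem_lift {m : ℕ} {n : Fin m → ℕ} (hn : ∀ k, 0 < n k)
    (M : Matrix ((k : Fin m) × Fin (n k)) ((k : Fin m) × Fin (n k)) ℝ)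
    (cc : Fin m → Fin m → ℝ) (hM : ∀ i j, M i j = cc i.1 j.1)
    (μ : ℝ) (u : Fin m → ℝ) (hu : u ≠ 0)
    (heig : ∀ k, ∑ l, (n l : ℝ) * cc k l * u l = μ * u k) :
    μ ∈ spectrum ℝ M := by
  rw [spectrum.mem_iff, Matrix.isUnit_iff_isUnit_det, isUnit_iff_ne_zero, not_not,
    ← Matrix.exists_mulVec_eq_zero_iff]
  refine ⟨fun i => u i.1, ?_, ?_⟩
  · intro h
    obtain ⟨k, hk⟩ : ∃ k, u k ≠ 0 := Function.ne_iff.1 hu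
    exact hk (congrFun h ⟨k, ⟨0, hn k⟩⟩)
  · rw [Matrix.sub_mulVec, algebraMap_mulVec]
    funext i
    have h := lift_mulVec M cc hM u i
    simp only [Pi.sub_apply, Pi.smul_apply, smul_eq_mul, h, heig i.1, Pi.zero_apply]
    ring

lemma spec_not_mem_lift {m : ℕ} {n : Fin m → ℕ}
    (M : Matrix ((k : Fin m) × Fin (n k)) ((k : Fin m) × Fin (n k)) ℝ)
    (cc : Fin m → Fin m → ℝ) (hM : ∀ i j, M i j = cc i.1 j.1)
    (μ : ℝ) (hμ0 : μ ≠ 0)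
    (hinj : ∀ u : Fin m → ℝ, (∀ k, ∑ l, (n l : ℝ) * cc k l * u l = μ * u k) → u = 0) :
    μ ∉ spectrum ℝ M := by
  rw [spectrum.mem_iff, not_not, Matrix.isUnit_iff_isUnit_det, isUnit_iff_ne_zero]
  intro hdet
  obtain ⟨v, hv0, hv⟩ := Matrix.exists_mulVec_eq_zero_iff.2 hdet
  have hMv : M *ᵥ v = μ • v := by
    rw [Matrix.sub_mulVec, algebraMap_mulVec, sub_eq_zero] at hv
    exact hv.symm
  set S : Fin m → ℝ := fun l => ∑ j : Fin (n l), v ⟨l, j⟩ with hS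
  have hrow : ∀ i, (M *ᵥ v) i = ∑ l, cc i.1 l * S l := by
    intro i
    show ∑ j : (k : Fin m) × Fin (n k), M i j * v j = _
    rw [← Finset.univ_sigma_univ, Finset.sum_sigma]
    refine Finset.sum_congr rfl fun l _ => ?_
    rw [Finset.mul_sum]
    exact Finset.sum_congr rfl fun j _ => by rw [hM]
  set u : Fin m → ℝ := fun k => (∑ l, cc k l * S l) / μ with hu
  have hvu : ∀ i, v i = u i.1 := by
    intro i
    have h1 := congrFun hMv i
    rw [hrow] at h1
    simp only [Pi.smul_apply, smul_eq_mul] at h1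
    show v i = (∑ l, cc i.1 l * S l) / μ
    rw [eq_div_iff hμ0]
    linarith [h1]
  have hSu : ∀ l, S l = (n l : ℝ) * u l := by
    intro l
    rw [hS]
    simp only
    rw [Finset.sum_congr rfl fun j _ => hvu ⟨l, j⟩]
    simp [mul_comm]
  have heq : ∀ k, ∑ l, (n l : ℝ) * cc k l * u l = μ * u k := by
    intro k
    have h2 : ∑ l, (n l : ℝ) * cc k l * u l = ∑ l, cc k l * S l := by
      refine Finset.sum_congr rfl fun l _ => ?_
      rw [hSu l]; ring
    rw [h2, hu]
    field_simp
  have := hinj u heq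
  apply hv0
  funext i
  rw [hvu i, this]
  rfl

lemma sum_eval {m : ℕ} (p q : ℝ) (k : Fin m) (f : Fin m → ℝ) :
    ∑ l, (if k = l then p else q) * f l = q * (∑ l, f l) + (p - q) * f k := by
  have h : ∀ l, (if k = l then p else q) * f l
      = q * f l + (if k = l then (p - q) * f l else 0) := by
    intro l; split <;> ring
  rw [Finset.sum_congr rfl fun l _ => h l, Finset.sum_add_distrib, Finset.sum_ite_eq,
    ← Finset.mul_sum]
  simp

lemma sum_if_zero {m : ℕ} (hm : 1 ≤ m) (A B : ℝ) :
    ∑ l : Fin m, (if (l : ℕ) = 0 then A else B) = A + ((m:ℝ) - 1) * B := by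
  haveI : NeZero m := ⟨by omega⟩
  have h : ∀ l : Fin m, (if (l : ℕ) = 0 then A else B)
      = B + (if l = (⟨0, by omega⟩ : Fin m) then A - B else 0) := by
    intro l
    by_cases h : (l : ℕ) = 0
    · rw [if_pos h, if_pos (Fin.ext (by simpa using h))]; ring
    · rw [if_neg h, if_neg (fun hl => h (by rw [hl]))]; ring
  rw [Finset.sum_congr rfl fun l _ => h l, Finset.sum_add_distrib, Finset.sum_ite_eq']
  simp only [Finset.sum_const, Finset.card_univ, Fintype.card_fin, nsmul_eq_mul,
    Finset.mem_univ, if_pos]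
  have hm' : (1:ℝ) ≤ (m:ℝ) := by exact_mod_cast hm
  ring

lemma quot_inj {m : ℕ} (hm : 2 ≤ m) (p q w₁ w₂ : ℝ)
    (hp : 0 < p) (hq : 0 < q) (hw₁ : 0 < w₁) (hw₂ : 0 < w₂)
    (w : Fin m → ℝ) (hw : ∀ l : Fin m, w l = if (l : ℕ) = 0 then w₁ else w₂)
    (s : Fin m → ℝ) (hs : ∀ k, s k = q * (∑ l, w l) + (p - q) * w k)
    (μ : ℝ) (hμ1 : μ ≠ 1)
    (hμe : μ ≠ p * w₁ / s ⟨0, by omega⟩ - q * w₁ / s ⟨1, by omega⟩)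
    (hμg : 3 ≤ m → μ ≠ (p - q) * w₂ / s ⟨1, by omega⟩)
    (u : Fin m → ℝ)
    (heig : ∀ k, ∑ l, (if k = l then p else q) * w l * u l = μ * (s k * u k)) :
    u = 0 := by
  haveI : NeZero m := ⟨by omega⟩
  set k₀ : Fin m := ⟨0, by omega⟩ with hk₀
  set k₁ : Fin m := ⟨1, by omega⟩ with hk₁
  have hwpos : ∀ l, 0 < w l := by intro l; rw [hw]; split <;> assumption
  have hspos : ∀ k, 0 < s k := by
    intro k
    have h : s k = ∑ l, (if k = l then p else q) * w l := by
      rw [sum_eval p q k w, hs]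
    rw [h]
    exact Finset.sum_pos (fun l _ => mul_pos (by split <;> assumption) (hwpos l))
      Finset.univ_nonempty
  have heig' : ∀ k, q * (∑ l, w l * u l) + (p - q) * (w k * u k) = μ * (s k * u k) := by
    intro k
    have h := heig k
    rw [Finset.sum_congr rfl (fun l _ => by ring :
      ∀ l ∈ Finset.univ, (if k = l then p else q) * w l * u l
        = (if k = l then p else q) * (w l * u l)), sum_eval p q k (fun l => w l * u l)] at h
    exact h
  have hwk₁ : w k₁ = w₂ := by rw [hw]; norm_num [hk₁]
  have hgrass : ∀ k : Fin m, (k : ℕ) ≠ 0 → u k = u k₁ := by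
    intro k hk0
    rcases eq_or_lt_of_le hm with hm2 | hm3
    · have hkk : k = k₁ := by apply Fin.ext; have := k.2; simp only [hk₁]; omega
      rw [hkk]
    · have hm3 : 3 ≤ m := hm3
      have e1 := heig' k
      have e2 := heig' k₁
      have hwk : w k = w₂ := by rw [hw]; simp [hk0]
      have hsk : s k = s k₁ := by rw [hs, hs, hwk, hwk₁]
      rw [hwk] at e1
      rw [hwk₁, ← hsk] at e2
      have hdiff : ((p - q) * w₂ - μ * s k₁) * (u k - u k₁) = 0 := by
        rw [← hsk]
        linear_combination e1 - e2
      rcases mul_eq_zero.1 hdiff with h | h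
      · exfalso
        exact (hμg hm3) (by field_simp [ne_of_gt (hspos k₁)]; linarith)
      · linarith [sub_eq_zero.1 h]
  set c := u k₁ with hc
  have hu : ∀ l : Fin m, u l = if (l : ℕ) = 0 then u k₀ else c := by
    intro l
    by_cases h : (l : ℕ) = 0
    · have hl : l = k₀ := Fin.ext (by rw [h, hk₀])
      rw [hl, if_pos (by rw [hk₀])]
    · rw [if_neg h]; exact hgrass l h
  have e0 := heig' k₀
  have e1 := heig' k₁
  have hwk₀ : w k₀ = w₁ := by rw [hw]; norm_num [hk₀]
  set u₀ := u k₀ with hu₀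
  have hsig : ∑ l, w l * u l = w₁ * u₀ + ((m:ℝ) - 1) * (w₂ * c) := by
    rw [Finset.sum_congr rfl (fun l _ => ?_ :
      ∀ l ∈ Finset.univ, w l * u l = if (l:ℕ) = 0 then w₁ * u₀ else w₂ * c)]
    · exact sum_if_zero (by omega) _ _
    · rw [hw, hu l]; split <;> ring
  have hW : ∑ l, w l = w₁ + ((m:ℝ) - 1) * w₂ := by
    rw [Finset.sum_congr rfl (fun l _ => hw l)]
    exact sum_if_zero (by omega) _ _
  have hs₀ : s k₀ = p * w₁ + ((m:ℝ) - 1) * q * w₂ := by rw [hs, hW, hwk₀]; ring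
  have hs₁ : s k₁ = q * w₁ + ((m:ℝ) - 1) * q * w₂ + (p - q) * w₂ := by rw [hs, hW, hwk₁]; ring
  rw [hsig, hwk₀, hs₀] at e0
  rw [hsig, hwk₁, ← hc, hs₁] at e1
  have hs₀pos := hspos k₀
  have hs₁pos := hspos k₁
  have key : (p * w₁ * s k₁ - q * w₁ * s k₀ - μ * (s k₀ * s k₁)) * (u₀ - c) = 0 := by
    rw [hs₀, hs₁]
    linear_combination (q * w₁ + ((m:ℝ) - 1) * q * w₂ + (p - q) * w₂) * e0
      - (p * w₁ + ((m:ℝ) - 1) * q * w₂) * e1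
  have hfac : p * w₁ * s k₁ - q * w₁ * s k₀ - μ * (s k₀ * s k₁) ≠ 0 := by
    intro h
    apply hμe
    field_simp
    linear_combination -h
  have huc : u₀ = c := by
    have h := (mul_eq_zero.1 key).resolve_left hfac
    linarith [sub_eq_zero.1 h]
  have hu₀0 : u₀ = 0 := by
    rw [← huc] at e0
    have h : (1 - μ) * ((p * w₁ + ((m:ℝ) - 1) * q * w₂) * u₀) = 0 := by
      linear_combination e0
    rcases mul_eq_zero.1 h with h' | h' 
    · exact absurd (by linarith) hμ1
    · rcases mul_eq_zero.1 h' with h'' | h''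
      · rw [← hs₀] at h''; exact absurd h'' (ne_of_gt hs₀pos)
      · exact h''
  funext l
  rw [hu l]
  simp only [Pi.zero_apply]
  split
  · exact hu₀0
  · rw [← huc]; exact hu₀0

lemma He_mono {A b C B x y : ℝ} (hA : 0 < A) (hb : 0 < b) (hC : 0 < C) (hB : 0 < B)
    (hx : 0 < x) (hxy : x ≤ y) (hy : y * y * (C * B) ≤ A * b) :
    x / ((A + C * x) * (b + B * x)) ≤ y / ((A + C * y) * (b + B * y)) := by
  have hxpos : (0:ℝ) < (A + C * x) * (b + B * x) := by positivity
  have hypos : (0:ℝ) < (A + C * y) * (b + B * y) := by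
    have : 0 < y := lt_of_lt_of_le hx hxy
    positivity
  rw [div_le_div_iff₀ hxpos hypos]
  have hy0 : 0 < y := lt_of_lt_of_le hx hxy
  have h1 : C * B * (x * y) ≤ A * b := by
    nlinarith [mul_nonneg (mul_nonneg hC.le hB.le) (mul_nonneg (sub_nonneg.2 hxy) hy0.le)]
  have h2 : (0:ℝ) ≤ (y - x) * (A * b - C * B * (x * y)) :=
    mul_nonneg (by linarith) (by linarith)
  nlinarith [h2]

lemma He_anti {A b C B x y : ℝ} (hA : 0 < A) (hb : 0 < b) (hC : 0 < C) (hB : 0 < B)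
    (hx : 0 < x) (hxy : x ≤ y) (hy : A * b ≤ x * x * (C * B)) :
    y / ((A + C * y) * (b + B * y)) ≤ x / ((A + C * x) * (b + B * x)) := by
  have hxpos : (0:ℝ) < (A + C * x) * (b + B * x) := by positivity
  have hypos : (0:ℝ) < (A + C * y) * (b + B * y) := by
    have : 0 < y := lt_of_lt_of_le hx hxy
    positivity
  rw [div_le_div_iff₀ hypos hxpos]
  have hy0 : 0 < y := lt_of_lt_of_le hx hxy
  have h1 : A * b ≤ C * B * (x * y) := by
    nlinarith [mul_nonneg (mul_nonneg hC.le hB.le) (mul_nonneg (sub_nonneg.2 hxy) hx.le)]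
  have h2 : (0:ℝ) ≤ (y - x) * (C * B * (x * y) - A * b) :=
    mul_nonneg (by linarith) (by linarith)
  nlinarith [h2]

lemma Hg_mono {b B x y : ℝ} (hb : 0 < b) (hB : 0 < B) (hx : 0 < x) (hxy : x ≤ y) :
    x / (b + B * x) ≤ y / (b + B * y) := by
  have hy : 0 < y := lt_of_lt_of_le hx hxy
  rw [div_le_div_iff₀ (by positivity) (by positivity)]
  nlinarith

lemma bound_E {A Cc bb Bb f1 f2 : ℝ} (hA : 0 < A) (hCc : 0 < Cc) (hbb : 0 < bb) (hBb : 0 < Bb)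
    (h1 : 0 < f1) (h2 : 0 < f2) :
    |f1 * f2 * (A * Bb - bb * Cc)| < (A * f1 + Cc * f2) * (bb * f1 + Bb * f2) := by
  rw [abs_lt]
  constructor <;>
    nlinarith [mul_pos (mul_pos hA hbb) (mul_pos h1 h1),
      mul_pos (mul_pos hA hBb) (mul_pos h1 h2),
      mul_pos (mul_pos hCc hbb) (mul_pos h1 h2),
      mul_pos (mul_pos hCc hBb) (mul_pos h2 h2)]

lemma bound_G {p q nn1 nn2 mm f1 f2 : ℝ} (hp : 0 < p) (hq : 0 < q)
    (h1 : 0 < nn1) (h2 : 0 < nn2) (hmm : 3 ≤ mm) (hf1 : 0 < f1) (hf2 : 0 < f2) :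
    |(p - q) * (nn2 * f2)| < nn1 * q * f1 + (nn2 * p + (mm - 2) * nn2 * q) * f2 := by
  rw [abs_lt]
  constructor <;>
    nlinarith [mul_pos (mul_pos hq h1) hf1, mul_pos (mul_pos hp h2) hf2,
      mul_pos (mul_pos hq h2) hf2,
      mul_nonneg (mul_nonneg (by linarith : (0:ℝ) ≤ mm - 3) (mul_pos hq h2).le) hf2.le]

end AuxLemmas


/-- Property 1 of a weight function: `C²` on `ℝ × [0,∞)`, positive, `φ(0,·) = 1`,
increasing in `α`, increasing in `d` for `α > 0` and decreasing in `d` for `α < 0`. -/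
structure Property1 (φ : ℝ → ℝ → ℝ) : Prop where
  smooth : ContDiffOn ℝ 2 (fun x : ℝ × ℝ => φ x.1 x.2) (Set.univ ×ˢ Set.Ici (0 : ℝ))
  pos : ∀ a d : ℝ, 0 ≤ d → 0 < φ a d
  eq_one : ∀ d : ℝ, 0 ≤ d → φ 0 d = 1
  mono_alpha : ∀ d : ℝ, 0 ≤ d → Monotone fun a => φ a d
  mono_d : ∀ a : ℝ, 0 < a → MonotoneOn (φ a) (Set.Ici 0)
  anti_d : ∀ a : ℝ, a < 0 → AntitoneOn (φ a) (Set.Ici 0)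

/-- Property 2: for `d₁ > d₂ ≥ 0` the ratio `α ↦ φ(α,d₂)/φ(α,d₁)` is strictly
decreasing, tends to `0` as `α → ∞`, and its reciprocal tends to `0` as `α → −∞`. -/
structure Property2 (φ : ℝ → ℝ → ℝ) : Prop where
  ratio_strictAnti : ∀ d₁ d₂ : ℝ, 0 ≤ d₂ → d₂ < d₁ → StrictAnti fun a => φ a d₂ / φ a d₁
  ratio_tendsto_atTop : ∀ d₁ d₂ : ℝ, 0 ≤ d₂ → d₂ < d₁ →
    Tendsto (fun a => φ a d₂ / φ a d₁) atTop (nhds 0)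
  ratio_tendsto_atBot : ∀ d₁ d₂ : ℝ, 0 ≤ d₂ → d₂ < d₁ →
    Tendsto (fun a => φ a d₁ / φ a d₂) atBot (nhds 0)

set_option maxHeartbeats 2000000 in
/-- monotonicity of `α ↦ |λ₂(T*(α))|` in the Elite–Grassroots model:
decreasing on the region `D_α` of Theorem 1 and increasing outside it. -/
theorem impact_of_degree_dependence
    (m : ℕ) (hm : 2 ≤ m)
    (n₁ n₂ : ℕ) (hn₁ : 0 < n₁) (hn₂ : 0 < n₂) (hne : n₁ ≠ n₂)
    (p q : ℝ) (hp : 0 < p) (hp1 : p < 1) (hq : 0 < q) (hq1 : q < 1) (hpq : p ≠ q)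
    (φ : ℝ → ℝ → ℝ) (h1 : Property1 φ) (h2 : Property2 φ)
    (R : Matrix ((k : Fin m) × Fin (if (k : ℕ) = 0 then n₁ else n₂))
                ((k : Fin m) × Fin (if (k : ℕ) = 0 then n₁ else n₂)) ℝ)
    (hR : ∀ i j, R i j = if i.1 = j.1 then p else q)
    (degR : ((k : Fin m) × Fin (if (k : ℕ) = 0 then n₁ else n₂)) → ℝ)
    (hdegR : ∀ i, degR i = ∑ j, R i j)
    (Tstar : ℝ → Matrix ((k : Fin m) × Fin (if (k : ℕ) = 0 then n₁ else n₂))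
                        ((k : Fin m) × Fin (if (k : ℕ) = 0 then n₁ else n₂)) ℝ)
    (hT : ∀ (a : ℝ) i j,
      Tstar a i j = R i j * φ a (degR j) / ∑ k, R i k * φ a (degR k))
    (d₁star d₂star : ℝ)
    (hd₁ : d₁star = (n₁ : ℝ) * p + ((m : ℝ) - 1) * (n₂ : ℝ) * q)
    (hd₂ : d₂star = (n₁ : ℝ) * q + (n₂ : ℝ) * p + ((m : ℝ) - 2) * (n₂ : ℝ) * q)
    (g : ℝ → ℝ) (hg : ∀ a, g a = φ a d₂star / φ a d₁star)
    (ginv : ℝ → ℝ)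
    (hginv : ∀ x : ℝ, 0 < x → g (ginv x) = x)
    (hginv' : ∀ a : ℝ, ginv (g a) = a)
    (Λ : ℝ → ℝ) (hΛ : ∀ a : ℝ, IsSecondMagEig (Tstar a) (Λ a)) :
    -- case (i): m = 2
    (m = 2 →
      AntitoneOn (fun a => |Λ a|) (Set.Ici (ginv ((n₁ : ℝ) / (n₂ : ℝ)))) ∧
      MonotoneOn (fun a => |Λ a|) (Set.Iio (ginv ((n₁ : ℝ) / (n₂ : ℝ))))) ∧
    -- case (ii): m ≥ 3 and d₁* > d₂*
    (3 ≤ m → d₂star < d₁star →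
      AntitoneOn (fun a => |Λ a|) (Set.Iic (ginv ((n₁ : ℝ) / (n₂ : ℝ)))) ∧
      AntitoneOn (fun a => |Λ a|)
        (Set.Ici (ginv (((n₁ : ℝ) / (n₂ : ℝ)) *
          Real.sqrt (p / (((m : ℝ) - 1) * (p + ((m : ℝ) - 2) * q)))))) ∧
      MonotoneOn (fun a => |Λ a|)
        (Set.Ioo (ginv ((n₁ : ℝ) / (n₂ : ℝ)))
          (ginv (((n₁ : ℝ) / (n₂ : ℝ)) *
            Real.sqrt (p / (((m : ℝ) - 1) * (p + ((m : ℝ) - 2) * q))))))) ∧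
    -- case (iii): m ≥ 3 and d₁* < d₂*
    (3 ≤ m → d₁star < d₂star →
      AntitoneOn (fun a => |Λ a|)
        (Set.Ioc (ginv (((n₁ : ℝ) / (n₂ : ℝ)) *
            Real.sqrt (p / (((m : ℝ) - 1) * (p + ((m : ℝ) - 2) * q)))))
          (ginv ((n₁ : ℝ) / (n₂ : ℝ)))) ∧
      MonotoneOn (fun a => |Λ a|)
        (Set.Iic (ginv (((n₁ : ℝ) / (n₂ : ℝ)) *
          Real.sqrt (p / (((m : ℝ) - 1) * (p + ((m : ℝ) - 2) * q)))))) ∧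
      MonotoneOn (fun a => |Λ a|) (Set.Ioi (ginv ((n₁ : ℝ) / (n₂ : ℝ))))) := by
  
  classical
  -- ======== basic numeric facts ========
  have hmR : (2:ℝ) ≤ (m:ℝ) := by exact_mod_cast hm
  have hm1R : (1:ℝ) ≤ (m:ℝ) - 1 := by linarith
  have hm0R : (0:ℝ) ≤ (m:ℝ) - 2 := by linarith
  have hn₁R : (0:ℝ) < (n₁:ℝ) := by exact_mod_cast hn₁
  have hn₂R : (0:ℝ) < (n₂:ℝ) := by exact_mod_cast hn₂
  set A := (n₁:ℝ) * p with hA_def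
  set Cc := ((m:ℝ) - 1) * (n₂:ℝ) * q with hCc_def
  set bb := (n₁:ℝ) * q with hbb_def
  set Bb := (n₂:ℝ) * p + ((m:ℝ) - 2) * (n₂:ℝ) * q with hBb_def
  have hA : 0 < A := mul_pos hn₁R hp
  have hCc : 0 < Cc := mul_pos (mul_pos (by linarith) hn₂R) hq
  have hbb : 0 < bb := mul_pos hn₁R hq
  have hBb : 0 < Bb := by
    have h1' : 0 < (n₂:ℝ) * p := mul_pos hn₂R hp
    have h2' : 0 ≤ ((m:ℝ) - 2) * (n₂:ℝ) * q := by positivity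
    linarith
  set Ke := (n₁:ℝ) * (n₂:ℝ) * |p - q| * (p + ((m:ℝ) - 1) * q) with hKe_def
  set Kg := (n₂:ℝ) * |p - q| with hKg_def
  have habspq : 0 < |p - q| := abs_pos.2 (sub_ne_zero.2 hpq)
  have hpmq : (0:ℝ) < p + ((m:ℝ) - 1) * q := by
    have h0 : (0:ℝ) ≤ ((m:ℝ) - 1) * q := mul_nonneg (by linarith) hq.le
    linarith
  have hKe0 : 0 ≤ Ke := by positivity
  have hKg0 : 0 ≤ Kg := by positivity
  set He : ℝ → ℝ := fun x => x / ((A + Cc * x) * (bb + Bb * x)) with hHe_def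
  set Hg : ℝ → ℝ := fun x => x / (bb + Bb * x) with hHg_def
  -- degrees
  have hd₁0 : 0 ≤ d₁star := by
    rw [hd₁]
    have h0 : (0:ℝ) ≤ ((m:ℝ)-1) * (n₂:ℝ) * q := by positivity
    linarith [mul_pos hn₁R hp]
  have hd₂0 : 0 ≤ d₂star := by
    rw [hd₂]
    have h0 : (0:ℝ) ≤ ((m:ℝ)-2) * (n₂:ℝ) * q := by positivity
    linarith [mul_pos hn₁R hq, mul_pos hn₂R hp]
  have hφ1pos : ∀ a, 0 < φ a d₁star := fun a => h1.pos a _ hd₁0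
  have hφ2pos : ∀ a, 0 < φ a d₂star := fun a => h1.pos a _ hd₂0
  have hgpos : ∀ a, 0 < g a := by
    intro a; rw [hg]; exact div_pos (hφ2pos a) (hφ1pos a)
  -- ======== degree identification ========
  have DEG : ∀ i : (k : Fin m) × Fin (if (k : ℕ) = 0 then n₁ else n₂),
      degR i = if (i.1 : ℕ) = 0 then d₁star else d₂star := by
    intro i
    rw [hdegR]
    have hstep : ∑ j : (k : Fin m) × Fin (if (k : ℕ) = 0 then n₁ else n₂), R i j
        = ∑ l : Fin m, (if i.1 = l then p else q)
            * (if (l : ℕ) = 0 then (n₁:ℝ) else (n₂:ℝ)) := by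
      rw [← Finset.univ_sigma_univ, Finset.sum_sigma]
      refine Finset.sum_congr rfl fun l _ => ?_
      rw [Finset.sum_congr rfl fun j _ => hR i ⟨l, j⟩]
      dsimp only
      rw [Finset.sum_const (b := if i.1 = l then p else q)]
      simp only [Finset.sum_const, Finset.card_univ, Fintype.card_fin, nsmul_eq_mul]
      by_cases h : (l : ℕ) = 0 <;> simp [h] <;> ring
    rw [hstep, sum_eval p q i.1 (fun l => if (l : ℕ) = 0 then (n₁:ℝ) else (n₂:ℝ)),
      sum_if_zero (by omega)]
    by_cases h : (i.1 : ℕ) = 0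
    · rw [if_pos h, if_pos h, hd₁, hA_def, hCc_def]; ring
    · rw [if_neg h, if_neg h, hd₂, hbb_def]; ring
  -- ======== master formula for |Λ a| ========
  have master : ∀ a : ℝ,
      (m = 2 → |Λ a| = Ke * He (g a)) ∧
      (3 ≤ m → |Λ a| = max (Ke * He (g a)) (Kg * Hg (g a))) := by
    intro a
    obtain ⟨lam1, hl1mem, hl1max, hΛmem, hΛne, hΛmax⟩ := hΛ a
    set φ₁ := φ a d₁star with hφ₁
    set φ₂ := φ a d₂star with hφ₂
    have hφ₁p : 0 < φ₁ := hφ1pos a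
    have hφ₂p : 0 < φ₂ := hφ2pos a
    set s₁v := A * φ₁ + Cc * φ₂ with hs₁v
    set s₂v := bb * φ₁ + Bb * φ₂ with hs₂v
    have hs₁p : 0 < s₁v := by positivity
    have hs₂p : 0 < s₂v := by positivity
    have hs₁ne : s₁v ≠ 0 := ne_of_gt hs₁p
    have hs₂ne : s₂v ≠ 0 := ne_of_gt hs₂p
    set lamE := A * φ₁ / s₁v - bb * φ₁ / s₂v with hlamE
    set lamG := (p - q) * ((n₂:ℝ) * φ₂) / s₂v with hlamG
    set wv : Fin m → ℝ := fun l => if (l : ℕ) = 0 then (n₁:ℝ) * φ₁ else (n₂:ℝ) * φ₂ with hwv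
    set sv : Fin m → ℝ := fun k => q * (∑ l, wv l) + (p - q) * wv k with hsv
    have hWsum : ∑ l, wv l = (n₁:ℝ) * φ₁ + ((m:ℝ) - 1) * ((n₂:ℝ) * φ₂) := by
      rw [Finset.sum_congr rfl (fun l _ => by rw [hwv])]
      exact sum_if_zero (by omega) _ _
    have hsv_eq : ∀ k : Fin m, sv k = if (k : ℕ) = 0 then s₁v else s₂v := by
      intro k
      simp only [hsv, hwv]
      rw [hWsum]
      by_cases h : (k : ℕ) = 0
      · rw [if_pos h, if_pos h, hs₁v, hA_def, hCc_def]; ring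
      · rw [if_neg h, if_neg h, hs₂v, hbb_def, hBb_def]; ring
    have hsvp : ∀ k, 0 < sv k := by
      intro k; rw [hsv_eq]; split <;> assumption
    set ccf : Fin m → Fin m → ℝ :=
      fun k l => (if k = l then p else q) * (if (l : ℕ) = 0 then φ₁ else φ₂) / sv k with hccf
    have hMcc : ∀ i j, Tstar a i j = ccf i.1 j.1 := by
      intro i j
      rw [hT]
      have hnum : R i j * φ a (degR j)
          = (if i.1 = j.1 then p else q) * (if (j.1 : ℕ) = 0 then φ₁ else φ₂) := by
        rw [hR, DEG]
        congr 1
        by_cases h : (j.1 : ℕ) = 0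
        · rw [if_pos h, if_pos h, hφ₁]
        · rw [if_neg h, if_neg h, hφ₂]
      have hden : ∑ k', R i k' * φ a (degR k') = sv i.1 := by
        have hstep : ∑ k' : (k : Fin m) × Fin (if (k : ℕ) = 0 then n₁ else n₂),
            R i k' * φ a (degR k')
            = ∑ l : Fin m, (if i.1 = l then p else q) * wv l := by
          rw [← Finset.univ_sigma_univ, Finset.sum_sigma]
          refine Finset.sum_congr rfl fun l _ => ?_
          have hterm : ∀ j : Fin (if (l : ℕ) = 0 then n₁ else n₂),
              R i ⟨l, j⟩ * φ a (degR ⟨l, j⟩)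
              = (if i.1 = l then p else q) * (if (l : ℕ) = 0 then φ₁ else φ₂) := by
            intro j
            rw [hR, DEG]
            show (if i.1 = l then p else q) * φ a (if (l : ℕ) = 0 then d₁star else d₂star) = _
            congr 1
            by_cases h : (l : ℕ) = 0
            · rw [if_pos h, if_pos h, hφ₁]
            · rw [if_neg h, if_neg h, hφ₂]
          rw [Finset.sum_congr rfl fun j _ => hterm j]
          simp only [Finset.sum_const, Finset.card_univ, Fintype.card_fin, nsmul_eq_mul]
          rw [hwv]
          by_cases h : (l : ℕ) = 0 <;> simp [h] <;> ring
        rw [hstep, sum_eval p q i.1 wv]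
      rw [hnum, hden, hccf]
    -- conversion between multiplied eigen-equations and normalized ones
    have hconv : ∀ (u : Fin m → ℝ) (k : Fin m),
        (∑ l : Fin m, ((if (l : ℕ) = 0 then n₁ else n₂ : ℕ) : ℝ) * ccf k l * u l)
          = (∑ l : Fin m, (if k = l then p else q) * wv l * u l) / sv k := by
      intro u k
      rw [Finset.sum_div]
      refine Finset.sum_congr rfl fun l _ => ?_
      rw [hccf, hwv]
      by_cases h : (l : ℕ) = 0
      · simp only [if_pos h]; push_cast; ring
      · simp only [if_neg h]; push_cast; ring
    -- 1 is an eigenvalue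
    have hone : (1:ℝ) ∈ spectrum ℝ (Tstar a) := by
      refine spec_mem_lift (n := fun k => if (k : ℕ) = 0 then n₁ else n₂)
        (fun k => by split <;> omega) (Tstar a) ccf hMcc 1 (fun _ => 1)
        (fun h => one_ne_zero (congrFun h ⟨0, by omega⟩)) ?_
      intro k
      rw [hconv (fun _ => 1) k]
      have h5' : ∑ l, (if k = l then p else q) * wv l * (1:ℝ)
          = q * (∑ l, wv l) + (p - q) * wv k := by
        rw [Finset.sum_congr rfl (fun l _ => by ring :
          ∀ l ∈ Finset.univ, (if k = l then p else q) * wv l * (1:ℝ)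
            = (if k = l then p else q) * wv l), sum_eval p q k wv]
      rw [h5']
      have h6' : q * (∑ l, wv l) + (p - q) * wv k = sv k := by simp only [hsv]
      rw [h6', div_self (ne_of_gt (hsvp k))]
      norm_num
    -- lamE is an eigenvalue
    have hEmem : lamE ∈ spectrum ℝ (Tstar a) := by
      set uE : Fin m → ℝ :=
        fun l => if (l : ℕ) = 0 then Cc * φ₂ * s₂v else -(bb * φ₁ * s₁v) with huE
      have huE0 : uE ≠ 0 := by
        intro h
        have h7' := congrFun h (⟨0, by omega⟩ : Fin m)
        simp only [huE, Pi.zero_apply] at h7'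
        norm_num at h7'
        rcases h7' with (h'|h')|h'
        · exact absurd h' (ne_of_gt hCc)
        · exact absurd h' (ne_of_gt hφ₂p)
        · exact absurd h' (ne_of_gt hs₂p)
      refine spec_mem_lift (n := fun k => if (k : ℕ) = 0 then n₁ else n₂)
        (fun k => by split <;> omega) (Tstar a) ccf hMcc lamE uE huE0 ?_
      intro k
      rw [hconv uE k]
      have hσ : ∑ l, wv l * uE l
          = (n₁:ℝ) * φ₁ * (Cc * φ₂ * s₂v) + ((m:ℝ) - 1) * ((n₂:ℝ) * φ₂ * (-(bb * φ₁ * s₁v))) := by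
        rw [Finset.sum_congr rfl (fun l _ => ?_ : ∀ l ∈ Finset.univ, wv l * uE l
          = if (l : ℕ) = 0 then (n₁:ℝ) * φ₁ * (Cc * φ₂ * s₂v)
            else (n₂:ℝ) * φ₂ * (-(bb * φ₁ * s₁v)))]
        · exact sum_if_zero (by omega) _ _
        · rw [hwv, huE]; by_cases h : (l : ℕ) = 0 <;> simp [h]
      have hsum : ∑ l, (if k = l then p else q) * wv l * uE l
          = q * (∑ l, wv l * uE l) + (p - q) * (wv k * uE k) := by
        rw [Finset.sum_congr rfl (fun l _ => by ring :
          ∀ l ∈ Finset.univ, (if k = l then p else q) * wv l * uE l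
            = (if k = l then p else q) * (wv l * uE l)),
          sum_eval p q k (fun l => wv l * uE l)]
      rw [hsum, hσ]
      rw [div_eq_iff (ne_of_gt (hsvp k))]
      rw [hsv_eq k]
      by_cases h : (k : ℕ) = 0
      · rw [if_pos h]
        have huEk : uE k = Cc * φ₂ * s₂v := by rw [huE]; simp only [if_pos h]
        have hwvk : wv k = (n₁:ℝ) * φ₁ := by rw [hwv]; simp only [if_pos h]
        rw [huEk, hwvk, hlamE, hA_def, hbb_def, hCc_def]
        field_simp
        ring
      · rw [if_neg h]
        have huEk : uE k = -(bb * φ₁ * s₁v) := by rw [huE]; simp only [if_neg h]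
        have hwvk : wv k = (n₂:ℝ) * φ₂ := by rw [hwv]; simp only [if_neg h]
        rw [huEk, hwvk, hlamE, hA_def, hbb_def, hCc_def, hs₂v, hBb_def]
        field_simp
        ring
    -- lamG is an eigenvalue when m ≥ 3
    have hGmem : 3 ≤ m → lamG ∈ spectrum ℝ (Tstar a) := by
      intro hm3
      set k₁ : Fin m := ⟨1, by omega⟩ with hk₁
      set k₂ : Fin m := ⟨2, by omega⟩ with hk₂
      have hk₁0 : ((k₁ : Fin m) : ℕ) ≠ 0 := by simp [hk₁]
      have hk₂0 : ((k₂ : Fin m) : ℕ) ≠ 0 := by simp [hk₂]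
      have hk₁₂ : k₁ ≠ k₂ := by simp [hk₁, hk₂, Fin.ext_iff]
      set uG : Fin m → ℝ :=
        fun l => (if l = k₁ then (1:ℝ) else 0) - (if l = k₂ then (1:ℝ) else 0) with huG
      have huG0 : uG ≠ 0 := by
        intro h
        have h8' := congrFun h k₁
        simp only [huG, Pi.zero_apply, if_pos rfl, if_neg hk₁₂] at h8'
        norm_num at h8'
      refine spec_mem_lift (n := fun k => if (k : ℕ) = 0 then n₁ else n₂)
        (fun k => by split <;> omega) (Tstar a) ccf hMcc lamG uG huG0 ?_
      intro k
      rw [hconv uG k]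
      have hσ : ∑ l, wv l * uG l = 0 := by
        have h9' : ∀ l : Fin m, wv l * uG l
            = (if l = k₁ then wv l else 0) - (if l = k₂ then wv l else 0) := by
          intro l; rw [huG]
          by_cases h : l = k₁ <;> by_cases h' : l = k₂ <;>
            simp [h, h', hk₁₂, Ne.symm hk₁₂]
        rw [Finset.sum_congr rfl fun l _ => h9' l, Finset.sum_sub_distrib,
          Finset.sum_ite_eq' Finset.univ k₁ wv, Finset.sum_ite_eq' Finset.univ k₂ wv]
        simp only [Finset.mem_univ, if_pos]
        rw [hwv]
        simp only [if_neg hk₁0, if_neg hk₂0]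
        ring
      have hsum : ∑ l, (if k = l then p else q) * wv l * uG l
          = q * (∑ l, wv l * uG l) + (p - q) * (wv k * uG k) := by
        rw [Finset.sum_congr rfl (fun l _ => by ring :
          ∀ l ∈ Finset.univ, (if k = l then p else q) * wv l * uG l
            = (if k = l then p else q) * (wv l * uG l)),
          sum_eval p q k (fun l => wv l * uG l)]
      rw [hsum, hσ]
      rw [div_eq_iff (ne_of_gt (hsvp k))]
      by_cases h : k = k₁
      · have huGk : uG k = 1 := by
          rw [huG]; simp only []; rw [h, if_pos rfl, if_neg hk₁₂]; norm_num
        have hwvk : wv k = (n₂:ℝ) * φ₂ := by rw [hwv, h]; simp only [if_neg hk₁0]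
        have hsvk : sv k = s₂v := by rw [hsv_eq, h, if_neg hk₁0]
        rw [huGk, hwvk, hsvk, hlamG]
        field_simp
        ring
      · by_cases h' : k = k₂
        · have huGk : uG k = -1 := by
            rw [huG]; simp only []; rw [h', if_neg (Ne.symm hk₁₂), if_pos rfl]; norm_num
          have hwvk : wv k = (n₂:ℝ) * φ₂ := by rw [hwv, h']; simp only [if_neg hk₂0]
          have hsvk : sv k = s₂v := by rw [hsv_eq, h', if_neg hk₂0]
          rw [huGk, hwvk, hsvk, hlamG]
          field_simp
          ring
        · have huGk : uG k = 0 := by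
            rw [huG]; simp only []; rw [if_neg h, if_neg h']; norm_num
          rw [huGk]
          ring
    -- the spectrum is contained in {0, 1, lamE, lamG}
    have SU : ∀ μ ∈ spectrum ℝ (Tstar a), μ = 0 ∨ μ = 1 ∨ μ = lamE ∨ (3 ≤ m ∧ μ = lamG) := by
      intro μ hμ
      by_contra hcon
      push_neg at hcon
      obtain ⟨hμ0, hμ1, hμE, hμG⟩ := hcon
      refine spec_not_mem_lift (n := fun k => if (k : ℕ) = 0 then n₁ else n₂)
        (Tstar a) ccf hMcc μ hμ0 ?_ hμ
      intro u hu
      have h14' : sv ⟨0, by omega⟩ = s₁v := by rw [hsv_eq]; norm_num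
      have h15' : sv ⟨1, by omega⟩ = s₂v := by rw [hsv_eq]; norm_num
      refine quot_inj hm p q ((n₁:ℝ) * φ₁) ((n₂:ℝ) * φ₂) hp hq (by positivity) (by positivity)
        wv (fun l => by rw [hwv]) sv (fun k => by rw [hsv]) μ hμ1 ?_ ?_ u ?_
      · rw [h14', h15']
        intro hcontr
        apply hμE
        rw [hcontr, hlamE, hA_def, hbb_def]
        ring
      · intro hm3 hcontr
        exact hμG hm3 (hcontr.trans (by rw [h15']))
      · intro k
        have h16' := hu k
        rw [hconv u k, div_eq_iff (ne_of_gt (hsvp k))] at h16'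
        rw [h16']
        ring
    -- bounds on the eigenvalues
    have hprod_pos : 0 < s₁v * s₂v := mul_pos hs₁p hs₂p
    have hlamE_prod : lamE * (s₁v * s₂v) = φ₁ * φ₂ * (A * Bb - bb * Cc) := by
      have h7' : lamE * (s₁v * s₂v) = A * φ₁ * s₂v - bb * φ₁ * s₁v := by
        rw [hlamE]; field_simp
      rw [h7', hs₁v, hs₂v]; ring
    have hE1 : |lamE| < 1 := by
      have h8' : |lamE| * (s₁v * s₂v) < 1 * (s₁v * s₂v) := by
        have heq : |lamE| * (s₁v * s₂v) = |lamE * (s₁v * s₂v)| := by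
          rw [abs_mul, abs_of_pos hprod_pos]
        rw [heq, hlamE_prod, one_mul, hs₁v, hs₂v]
        exact bound_E hA hCc hbb hBb hφ₁p hφ₂p
      exact lt_of_mul_lt_mul_right (by linarith [h8']) hprod_pos.le
    have hG1 : 3 ≤ m → |lamG| < 1 := by
      intro hm3
      have hm3R : (3:ℝ) ≤ (m:ℝ) := by exact_mod_cast hm3
      have h9' : |lamG| * s₂v < 1 * s₂v := by
        have heq : |lamG| * s₂v = |lamG * s₂v| := by rw [abs_mul, abs_of_pos hs₂p]
        have h10' : lamG * s₂v = (p - q) * ((n₂:ℝ) * φ₂) := by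
          rw [hlamG]; field_simp
        rw [heq, h10', one_mul, hs₂v, hbb_def, hBb_def]
        exact bound_G hp hq hn₁R hn₂R hm3R hφ₁p hφ₂p
      exact lt_of_mul_lt_mul_right (by linarith [h9']) hs₂p.le
    -- closed forms
    have hHeval : He (g a) = φ₁ * φ₂ / (s₁v * s₂v) := by
      have hga : g a = φ₂ / φ₁ := by rw [hg, ← hφ₁, ← hφ₂]
      have hne1 : A + Cc * (φ₂ / φ₁) ≠ 0 := by positivity
      have hne2 : bb + Bb * (φ₂ / φ₁) ≠ 0 := by positivity
      rw [hga]
      simp only [hHe_def]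
      rw [hs₁v, hs₂v]
      field_simp
    have hHgval : Hg (g a) = φ₂ / s₂v := by
      have hga : g a = φ₂ / φ₁ := by rw [hg, ← hφ₁, ← hφ₂]
      have hne2 : bb + Bb * (φ₂ / φ₁) ≠ 0 := by positivity
      rw [hga]
      simp only [hHg_def]
      rw [hs₂v]
      field_simp
    have habsE : |lamE| = Ke * He (g a) := by
      have h11' : lamE = (p - q) * ((n₁:ℝ) * (n₂:ℝ) * (p + ((m:ℝ) - 1) * q)
          * (φ₁ * φ₂) / (s₁v * s₂v)) := by
        have h12' : φ₁ * φ₂ * (A * Bb - bb * Cc)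
            = (p - q) * ((n₁:ℝ) * (n₂:ℝ) * (p + ((m:ℝ) - 1) * q) * (φ₁ * φ₂)) := by
          rw [hA_def, hBb_def, hbb_def, hCc_def]; ring
        have h13' : lamE = φ₁ * φ₂ * (A * Bb - bb * Cc) / (s₁v * s₂v) := by
          rw [← hlamE_prod]; field_simp
        rw [h13', h12', mul_div_assoc]
      have hXpos : 0 < (n₁:ℝ) * (n₂:ℝ) * (p + ((m:ℝ) - 1) * q) * (φ₁ * φ₂) / (s₁v * s₂v) :=
        div_pos (mul_pos (mul_pos (mul_pos hn₁R hn₂R) hpmq) (mul_pos hφ₁p hφ₂p)) hprod_pos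
      rw [h11', abs_mul, abs_of_pos hXpos, hHeval, hKe_def]
      ring
    have habsG : |lamG| = Kg * Hg (g a) := by
      have h11' : lamG = (p - q) * ((n₂:ℝ) * φ₂ / s₂v) := by rw [hlamG]; ring
      have hXpos : 0 < (n₂:ℝ) * φ₂ / s₂v := by positivity
      rw [h11', abs_mul, abs_of_pos hXpos, hHgval, hKg_def]
      ring
    -- identify lam1 = 1
    have h16'' := hl1max 1 hone
    have hlam1 : lam1 = 1 := by
      rcases SU lam1 hl1mem with h | h | h | ⟨hm3, h⟩
      · exfalso; rw [h] at h16''; norm_num at h16''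
      · exact h
      · exfalso; rw [h] at h16''; rw [abs_one] at h16''; linarith [hE1]
      · exfalso; rw [h] at h16''; rw [abs_one] at h16''; linarith [hG1 hm3]
    have hEne1 : lamE ≠ 1 := by
      intro h; rw [h, abs_one] at hE1; linarith
    have hlowE : |lamE| ≤ |Λ a| := hΛmax lamE hEmem (by rw [hlam1]; exact hEne1)
    constructor
    · intro hm2
      have hupp : |Λ a| ≤ |lamE| := by
        rcases SU (Λ a) hΛmem with h | h | h | ⟨hm3, h⟩
        · rw [h, abs_zero]; exact abs_nonneg lamE
        · exact absurd (h.trans hlam1.symm) hΛne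
        · rw [h]
        · omega
      rw [le_antisymm hupp hlowE, habsE]
    · intro hm3
      have hGne1 : lamG ≠ 1 := by
        intro h; have := hG1 hm3; rw [h, abs_one] at this; linarith
      have hlowG : |lamG| ≤ |Λ a| := hΛmax lamG (hGmem hm3) (by rw [hlam1]; exact hGne1)
      have hupp : |Λ a| ≤ max |lamE| |lamG| := by
        rcases SU (Λ a) hΛmem with h | h | h | ⟨_, h⟩
        · rw [h, abs_zero]; exact le_max_of_le_left (abs_nonneg lamE)
        · exact absurd (h.trans hlam1.symm) hΛne
        · rw [h]; exact le_max_left _ _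
        · rw [h]; exact le_max_right _ _
      rw [le_antisymm hupp (max_le hlowE hlowG), habsE, habsG]
  -- ======== analytic ingredients ========
  have hx₁pos : 0 < (n₁:ℝ) / (n₂:ℝ) := by positivity
  have hcmp1 : ∀ x : ℝ, 0 < x → x ≤ (n₁:ℝ) / (n₂:ℝ) → Kg * Hg x ≤ Ke * He x := by
    intro x hx hxle
    have hd : (n₂:ℝ) * x ≤ (n₁:ℝ) := by
      rw [le_div_iff₀ hn₂R] at hxle; linarith [hxle]
    have h17' : (0:ℝ) ≤ ((m:ℝ) - 1) * q * ((n₁:ℝ) - (n₂:ℝ) * x) * ((n₂:ℝ) * |p - q|) := by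
      apply mul_nonneg
      apply mul_nonneg
      apply mul_nonneg (by linarith) hq.le
      · linarith
      · positivity
    have hsc : Kg * (A + Cc * x) ≤ Ke := by
      have hid : Ke - Kg * (A + Cc * x)
          = ((m:ℝ) - 1) * q * ((n₁:ℝ) - (n₂:ℝ) * x) * ((n₂:ℝ) * |p - q|) := by
        rw [hKe_def, hKg_def, hA_def, hCc_def]; ring
      linarith [hid ▸ h17']
    have hden : 0 < bb + Bb * x := by positivity
    have hden2 : 0 < A + Cc * x := by positivity
    simp only [hHe_def, hHg_def]
    rw [mul_div_assoc', mul_div_assoc', div_le_div_iff₀ hden (by positivity)]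
    calc Kg * x * ((A + Cc * x) * (bb + Bb * x))
        = (Kg * (A + Cc * x)) * (x * (bb + Bb * x)) := by ring
      _ ≤ Ke * (x * (bb + Bb * x)) :=
          mul_le_mul_of_nonneg_right hsc (mul_nonneg hx.le hden.le)
      _ = Ke * x * (bb + Bb * x) := by ring
  have hcmp2 : ∀ x : ℝ, 0 < x → (n₁:ℝ) / (n₂:ℝ) ≤ x → Ke * He x ≤ Kg * Hg x := by
    intro x hx hxle
    have hd : (n₁:ℝ) ≤ (n₂:ℝ) * x := by
      rw [div_le_iff₀ hn₂R] at hxle; linarith [hxle]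
    have h17' : (0:ℝ) ≤ ((m:ℝ) - 1) * q * ((n₂:ℝ) * x - (n₁:ℝ)) * ((n₂:ℝ) * |p - q|) := by
      apply mul_nonneg
      apply mul_nonneg
      apply mul_nonneg (by linarith) hq.le
      · linarith
      · positivity
    have hsc : Ke ≤ Kg * (A + Cc * x) := by
      have hid : Kg * (A + Cc * x) - Ke
          = ((m:ℝ) - 1) * q * ((n₂:ℝ) * x - (n₁:ℝ)) * ((n₂:ℝ) * |p - q|) := by
        rw [hKe_def, hKg_def, hA_def, hCc_def]; ring
      linarith [hid ▸ h17']
    have hden : 0 < bb + Bb * x := by positivity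
    have hden2 : 0 < A + Cc * x := by positivity
    simp only [hHe_def, hHg_def]
    rw [mul_div_assoc', mul_div_assoc', div_le_div_iff₀ (by positivity) hden]
    calc Ke * x * (bb + Bb * x)
        = Ke * (x * (bb + Bb * x)) := by ring
      _ ≤ (Kg * (A + Cc * x)) * (x * (bb + Bb * x)) :=
          mul_le_mul_of_nonneg_right hsc (mul_nonneg hx.le hden.le)
      _ = Kg * x * ((A + Cc * x) * (bb + Bb * x)) := by ring
  -- monotonicity of the pieces, as inequalities on He, Hg
  have hHemono : ∀ x y : ℝ, 0 < x → x ≤ y → y * y * (Cc * Bb) ≤ A * bb → He x ≤ He y := by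
    intro x y hx hxy hy
    simp only [hHe_def]
    exact He_mono hA hbb hCc hBb hx hxy hy
  have hHeanti : ∀ x y : ℝ, 0 < x → x ≤ y → A * bb ≤ x * x * (Cc * Bb) → He y ≤ He x := by
    intro x y hx hxy hy
    simp only [hHe_def]
    exact He_anti hA hbb hCc hBb hx hxy hy
  have hHgmono : ∀ x y : ℝ, 0 < x → x ≤ y → Hg x ≤ Hg y := by
    intro x y hx hxy
    simp only [hHg_def]
    exact Hg_mono hbb hBb hx hxy
  -- the sqrt threshold
  have hDpos : (0:ℝ) < ((m:ℝ) - 1) * (p + ((m:ℝ) - 2) * q) :=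
    mul_pos (by linarith) (add_pos_of_pos_of_nonneg hp (mul_nonneg hm0R hq.le))
  have harg_pos : 0 < p / (((m:ℝ) - 1) * (p + ((m:ℝ) - 2) * q)) := div_pos hp hDpos
  have ht₂pos : 0 < (n₁:ℝ) / (n₂:ℝ) * Real.sqrt (p / (((m:ℝ) - 1) * (p + ((m:ℝ) - 2) * q))) :=
    mul_pos hx₁pos (Real.sqrt_pos.2 harg_pos)
  have ht₂sq : ((n₁:ℝ) / (n₂:ℝ) * Real.sqrt (p / (((m:ℝ) - 1) * (p + ((m:ℝ) - 2) * q))))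
      * ((n₁:ℝ) / (n₂:ℝ) * Real.sqrt (p / (((m:ℝ) - 1) * (p + ((m:ℝ) - 2) * q))))
      * (Cc * Bb) = A * bb := by
    have h19' : Real.sqrt (p / (((m:ℝ) - 1) * (p + ((m:ℝ) - 2) * q)))
        * Real.sqrt (p / (((m:ℝ) - 1) * (p + ((m:ℝ) - 2) * q)))
        = p / (((m:ℝ) - 1) * (p + ((m:ℝ) - 2) * q)) := Real.mul_self_sqrt harg_pos.le
    have h20' : ((n₁:ℝ) / (n₂:ℝ) * Real.sqrt (p / (((m:ℝ) - 1) * (p + ((m:ℝ) - 2) * q))))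
        * ((n₁:ℝ) / (n₂:ℝ) * Real.sqrt (p / (((m:ℝ) - 1) * (p + ((m:ℝ) - 2) * q))))
        = ((n₁:ℝ) / (n₂:ℝ)) * ((n₁:ℝ) / (n₂:ℝ)) * (p / (((m:ℝ) - 1) * (p + ((m:ℝ) - 2) * q))) := by
      rw [mul_mul_mul_comm, h19']
    rw [h20', hA_def, hCc_def, hbb_def, hBb_def]
    field_simp
  have ht₂le : (n₁:ℝ) / (n₂:ℝ) * Real.sqrt (p / (((m:ℝ) - 1) * (p + ((m:ℝ) - 2) * q)))
      ≤ (n₁:ℝ) / (n₂:ℝ) := by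
    have h21' : Real.sqrt (p / (((m:ℝ) - 1) * (p + ((m:ℝ) - 2) * q))) ≤ 1 := by
      rw [Real.sqrt_le_one]
      rw [div_le_one hDpos]
      have hexp : ((m:ℝ) - 1) * (p + ((m:ℝ) - 2) * q)
          = p + ((m:ℝ) - 2) * p + (((m:ℝ) - 1) * (((m:ℝ) - 2) * q)) := by ring
      rw [hexp]
      have h0 : (0:ℝ) ≤ ((m:ℝ) - 2) * p := mul_nonneg hm0R hp.le
      have h0' : (0:ℝ) ≤ ((m:ℝ) - 1) * (((m:ℝ) - 2) * q) :=
        mul_nonneg (by linarith) (mul_nonneg hm0R hq.le)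
      linarith
    calc (n₁:ℝ) / (n₂:ℝ) * Real.sqrt (p / (((m:ℝ) - 1) * (p + ((m:ℝ) - 2) * q)))
        ≤ (n₁:ℝ) / (n₂:ℝ) * 1 := mul_le_mul_of_nonneg_left h21' hx₁pos.le
      _ = (n₁:ℝ) / (n₂:ℝ) := mul_one _
  set x1v := (n₁:ℝ) / (n₂:ℝ) with hx1v_def
  set t2v := x1v * Real.sqrt (p / (((m:ℝ) - 1) * (p + ((m:ℝ) - 2) * q))) with ht2v_def
  have hsqle : ∀ y : ℝ, 0 < y → y ≤ t2v → y * y * (Cc * Bb) ≤ A * bb := by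
    intro y hy hyt
    have h1' : y * y ≤ t2v * t2v := mul_le_mul hyt hyt hy.le ht₂pos.le
    calc y * y * (Cc * Bb) ≤ t2v * t2v * (Cc * Bb) :=
          mul_le_mul_of_nonneg_right h1' (mul_pos hCc hBb).le
      _ = A * bb := ht₂sq
  have hsqge : ∀ y : ℝ, t2v ≤ y → A * bb ≤ y * y * (Cc * Bb) := by
    intro y hyt
    have h1' : t2v * t2v ≤ y * y := mul_le_mul hyt hyt ht₂pos.le (le_trans ht₂pos.le hyt)
    calc A * bb = t2v * t2v * (Cc * Bb) := ht₂sq.symm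
      _ ≤ y * y * (Cc * Bb) := mul_le_mul_of_nonneg_right h1' (mul_pos hCc hBb).le
  have hsq2 : m = 2 → x1v * x1v * (Cc * Bb) = A * bb := by
    intro hm2
    have hm2R : (m:ℝ) = 2 := by rw [hm2]; norm_num
    rw [hx1v_def, hA_def, hCc_def, hbb_def, hBb_def, hm2R]
    field_simp
    ring
  -- monotonicity direction of g
  have hdd : d₁star - d₂star = ((n₁:ℝ) - (n₂:ℝ)) * (p - q) := by
    rw [hd₁, hd₂, hA_def, hCc_def, hbb_def]; ring
  have hgne : d₁star ≠ d₂star := by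
    intro h
    have h0 : ((n₁:ℝ) - (n₂:ℝ)) * (p - q) = 0 := by rw [← hdd, h, sub_self]
    rcases mul_eq_zero.1 h0 with h' | h'
    · have hcast : (n₁:ℝ) = (n₂:ℝ) := by linarith
      exact hne (Nat.cast_injective hcast)
    · exact hpq (by linarith)
  have hganti : d₂star < d₁star → StrictAnti g := by
    intro hlt a b hab
    have h0 := h2.ratio_strictAnti d₁star d₂star hd₂0 hlt hab
    rw [hg a, hg b]
    exact h0
  have hgmono : d₁star < d₂star → StrictMono g := by
    intro hlt a b hab
    have h0 := h2.ratio_strictAnti d₂star d₁star hd₁0 hlt hab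
    simp only at h0
    rw [hg a, hg b, div_lt_div_iff₀ (hφ1pos a) (hφ1pos b)]
    rw [div_lt_div_iff₀ (hφ2pos b) (hφ2pos a)] at h0
    calc φ a d₂star * φ b d₁star = φ b d₁star * φ a d₂star := mul_comm _ _
      _ < φ a d₁star * φ b d₂star := h0
      _ = φ b d₂star * φ a d₁star := mul_comm _ _
  -- piecewise description of the max
  have hmaxE : ∀ x : ℝ, 0 < x → x ≤ x1v → max (Ke * He x) (Kg * Hg x) = Ke * He x :=
    fun x hx hle => max_eq_left (hcmp1 x hx hle)
  have hmaxG : ∀ x : ℝ, 0 < x → x1v ≤ x → max (Ke * He x) (Kg * Hg x) = Kg * Hg x :=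
    fun x hx hle => max_eq_right (hcmp2 x hx hle)
  refine ⟨?_, ?_, ?_⟩
  -- ===== case (i) : m = 2 =====
  · intro hm2
    have hmono2 : ∀ x y : ℝ, 0 < x → x ≤ y → y ≤ x1v → He x ≤ He y := by
      intro x y hx hxy hyle
      apply hHemono x y hx hxy
      have h1' : y * y ≤ x1v * x1v := mul_le_mul hyle hyle (le_trans hx.le hxy) hx₁pos.le
      calc y * y * (Cc * Bb) ≤ x1v * x1v * (Cc * Bb) :=
            mul_le_mul_of_nonneg_right h1' (mul_pos hCc hBb).le
        _ = A * bb := hsq2 hm2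
    have hanti2 : ∀ x y : ℝ, 0 < x → x ≤ y → x1v ≤ x → He y ≤ He x := by
      intro x y hx hxy hxge
      apply hHeanti x y hx hxy
      have h1' : x1v * x1v ≤ x * x := mul_le_mul hxge hxge hx₁pos.le hx.le
      calc A * bb = x1v * x1v * (Cc * Bb) := (hsq2 hm2).symm
        _ ≤ x * x * (Cc * Bb) := mul_le_mul_of_nonneg_right h1' (mul_pos hCc hBb).le
    rcases lt_or_gt_of_ne hgne with hlt | hgt
    · have hgm := hgmono hlt
      constructor
      · intro a ha b hb hab
        simp only [Set.mem_Ici] at ha hb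
        show |Λ b| ≤ |Λ a|
        have hga : x1v ≤ g a := by
          have h0 := hgm.monotone ha
          rwa [hginv _ hx₁pos] at h0
        have hgab : g a ≤ g b := hgm.monotone hab
        rw [(master a).1 hm2, (master b).1 hm2]
        exact mul_le_mul_of_nonneg_left (hanti2 (g a) (g b) (hgpos a) hgab hga) hKe0
      · intro a ha b hb hab
        simp only [Set.mem_Iio] at ha hb
        show |Λ a| ≤ |Λ b|
        have hgb : g b < x1v := by
          have h0 := hgm hb
          rwa [hginv _ hx₁pos] at h0
        have hgab : g a ≤ g b := hgm.monotone hab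
        rw [(master a).1 hm2, (master b).1 hm2]
        exact mul_le_mul_of_nonneg_left (hmono2 (g a) (g b) (hgpos a) hgab hgb.le) hKe0
    · have hgm := hganti hgt
      constructor
      · intro a ha b hb hab
        simp only [Set.mem_Ici] at ha hb
        show |Λ b| ≤ |Λ a|
        have hga : g a ≤ x1v := by
          have h0 := hgm.antitone ha
          rwa [hginv _ hx₁pos] at h0
        have hgab : g b ≤ g a := hgm.antitone hab
        rw [(master a).1 hm2, (master b).1 hm2]
        exact mul_le_mul_of_nonneg_left (hmono2 (g b) (g a) (hgpos b) hgab hga) hKe0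
      · intro a ha b hb hab
        simp only [Set.mem_Iio] at ha hb
        show |Λ a| ≤ |Λ b|
        have hgb : x1v < g b := by
          have h0 := hgm hb
          rwa [hginv _ hx₁pos] at h0
        have hgab : g b ≤ g a := hgm.antitone hab
        rw [(master a).1 hm2, (master b).1 hm2]
        exact mul_le_mul_of_nonneg_left (hanti2 (g b) (g a) (hgpos b) hgab hgb.le) hKe0
  -- ===== case (ii) : m ≥ 3 and d₂* < d₁* =====
  · intro hm3 hlt
    have hgm := hganti hlt
    refine ⟨?_, ?_, ?_⟩
    · intro a ha b hb hab
      simp only [Set.mem_Iic] at ha hb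
      show |Λ b| ≤ |Λ a|
      have hgb : x1v ≤ g b := by
        have h0 := hgm.antitone hb
        rwa [hginv _ hx₁pos] at h0
      have hgab : g b ≤ g a := hgm.antitone hab
      rw [(master a).2 hm3, (master b).2 hm3,
        hmaxG (g a) (hgpos a) (le_trans hgb hgab), hmaxG (g b) (hgpos b) hgb]
      exact mul_le_mul_of_nonneg_left (hHgmono (g b) (g a) (hgpos b) hgab) hKg0
    · intro a ha b hb hab
      simp only [Set.mem_Ici] at ha hb
      show |Λ b| ≤ |Λ a|
      have hga : g a ≤ t2v := by
        have h0 := hgm.antitone ha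
        rwa [hginv _ ht₂pos] at h0
      have hgab : g b ≤ g a := hgm.antitone hab
      rw [(master a).2 hm3, (master b).2 hm3,
        hmaxE (g a) (hgpos a) (le_trans hga ht₂le),
        hmaxE (g b) (hgpos b) (le_trans (le_trans hgab hga) ht₂le)]
      exact mul_le_mul_of_nonneg_left
        (hHemono (g b) (g a) (hgpos b) hgab (hsqle (g a) (hgpos a) hga)) hKe0
    · intro a ha b hb hab
      obtain ⟨ha1, ha2⟩ := ha
      obtain ⟨hb1, hb2⟩ := hb
      show |Λ a| ≤ |Λ b|
      have hga : g a < x1v := by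
        have h0 := hgm ha1
        rwa [hginv _ hx₁pos] at h0
      have hgb : t2v < g b := by
        have h0 := hgm hb2
        rwa [hginv _ ht₂pos] at h0
      have hgab : g b ≤ g a := hgm.antitone hab
      rw [(master a).2 hm3, (master b).2 hm3,
        hmaxE (g a) (hgpos a) hga.le, hmaxE (g b) (hgpos b) (le_trans hgab hga.le)]
      exact mul_le_mul_of_nonneg_left
        (hHeanti (g b) (g a) (hgpos b) hgab (hsqge (g b) hgb.le)) hKe0
  -- ===== case (iii) : m ≥ 3 and d₁* < d₂* =====
  · intro hm3 hlt
    have hgm := hgmono hlt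
    refine ⟨?_, ?_, ?_⟩
    · intro a ha b hb hab
      obtain ⟨ha1, ha2⟩ := ha
      obtain ⟨hb1, hb2⟩ := hb
      show |Λ b| ≤ |Λ a|
      have hga : t2v < g a := by
        have h0 := hgm ha1
        rwa [hginv _ ht₂pos] at h0
      have hgb : g b ≤ x1v := by
        have h0 := hgm.monotone hb2
        rwa [hginv _ hx₁pos] at h0
      have hgab : g a ≤ g b := hgm.monotone hab
      rw [(master a).2 hm3, (master b).2 hm3,
        hmaxE (g a) (hgpos a) (le_trans hgab hgb), hmaxE (g b) (hgpos b) hgb]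
      exact mul_le_mul_of_nonneg_left
        (hHeanti (g a) (g b) (hgpos a) hgab (hsqge (g a) hga.le)) hKe0
    · intro a ha b hb hab
      simp only [Set.mem_Iic] at ha hb
      show |Λ a| ≤ |Λ b|
      have hgb : g b ≤ t2v := by
        have h0 := hgm.monotone hb
        rwa [hginv _ ht₂pos] at h0
      have hgab : g a ≤ g b := hgm.monotone hab
      rw [(master a).2 hm3, (master b).2 hm3,
        hmaxE (g a) (hgpos a) (le_trans (le_trans hgab hgb) ht₂le),
        hmaxE (g b) (hgpos b) (le_trans hgb ht₂le)]
      exact mul_le_mul_of_nonneg_left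
        (hHemono (g a) (g b) (hgpos a) hgab (hsqle (g b) (hgpos b) hgb)) hKe0
    · intro a ha b hb hab
      simp only [Set.mem_Ioi] at ha hb
      show |Λ a| ≤ |Λ b|
      have hga : x1v < g a := by
        have h0 := hgm ha
        rwa [hginv _ hx₁pos] at h0
      have hgab : g a ≤ g b := hgm.monotone hab
      rw [(master a).2 hm3, (master b).2 hm3,
        hmaxG (g a) (hgpos a) hga.le, hmaxG (g b) (hgpos b) (le_trans hga.le hgab)]
      exact mul_le_mul_of_nonneg_left (hHgmono (g a) (g b) (hgpos a) hgab) hKg0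
end

section
/- Let g : ℝ → (0,∞) be differentiable with g′(α) < 0 for all α, and let 0 < C₁ < C₂ be constants. Define F(α) = 1/(1 + C₁ g(α)) − 1/(1 + C₂ g(α)). Then F′(α) = g′(α) · (C₂ − C₁)(1 − C₁C₂ g(α)²) / ((1 + C₁ g(α))²(1 + C₂ g(α))²) for every α; in particular F′(α) ≤ 0 if and only if g(α) ≤ 1/√(C₁C₂), so F is monotonically decreasing on {α : g(α) ≤ 1/√(C₁C₂)} and monotonically increasing on {α : g(α) ≥ 1/√(C₁C₂)}. -/
/-- key calculus step.  For `g` differentiable with `g' < 0`, `g > 0`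
and `0 < C₁ < C₂`, the function `F(α) = 1/(1+C₁g(α)) − 1/(1+C₂g(α))` has the stated
derivative; `F'(α) ≤ 0 ↔ g(α) ≤ 1/√(C₁C₂)`, so `F` is decreasing where
`g ≤ 1/√(C₁C₂)` and increasing where `g ≥ 1/√(C₁C₂)`. -/
theorem lambda2_derivative_formula
    (g : ℝ → ℝ) (hg : Differentiable ℝ g)
    (hg' : ∀ a : ℝ, deriv g a < 0) (hgpos : ∀ a : ℝ, 0 < g a)
    (C₁ C₂ : ℝ) (hC₁ : 0 < C₁) (hC₁₂ : C₁ < C₂)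
    (F : ℝ → ℝ) (hF : ∀ a : ℝ, F a = 1 / (1 + C₁ * g a) - 1 / (1 + C₂ * g a)) :
    (∀ a : ℝ, deriv F a =
      deriv g a * ((C₂ - C₁) * (1 - C₁ * C₂ * g a ^ 2) /
        ((1 + C₁ * g a) ^ 2 * (1 + C₂ * g a) ^ 2))) ∧
    (∀ a : ℝ, deriv F a ≤ 0 ↔ g a ≤ 1 / Real.sqrt (C₁ * C₂)) ∧
    AntitoneOn F {a : ℝ | g a ≤ 1 / Real.sqrt (C₁ * C₂)} ∧
    MonotoneOn F {a : ℝ | 1 / Real.sqrt (C₁ * C₂) ≤ g a} := by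
  have hC₂ : 0 < C₂ := hC₁.trans hC₁₂
  have hden₁ : ∀ a, (0:ℝ) < 1 + C₁ * g a := fun a => by
    nlinarith [mul_pos hC₁ (hgpos a)]
  have hden₂ : ∀ a, (0:ℝ) < 1 + C₂ * g a := fun a => by
    nlinarith [mul_pos hC₂ (hgpos a)]
  have hFeq : F = fun x => (1 + C₁ * g x)⁻¹ - (1 + C₂ * g x)⁻¹ := by
    funext x; rw [hF x, one_div, one_div]
  have key : ∀ a, HasDerivAt F
      (deriv g a * ((C₂ - C₁) * (1 - C₁ * C₂ * g a ^ 2) /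
        ((1 + C₁ * g a) ^ 2 * (1 + C₂ * g a) ^ 2))) a := by
    intro a
    have hg1 := (hg a).hasDerivAt
    have h1 : HasDerivAt (fun x => 1 + C₁ * g x) (C₁ * deriv g a) a :=
      (hg1.const_mul C₁).const_add 1
    have h2 : HasDerivAt (fun x => 1 + C₂ * g x) (C₂ * deriv g a) a :=
      (hg1.const_mul C₂).const_add 1
    have h1' := h1.inv (ne_of_gt (hden₁ a))
    have h2' := h2.inv (ne_of_gt (hden₂ a))
    have h : HasDerivAt (fun x => (1 + C₁ * g x)⁻¹ - (1 + C₂ * g x)⁻¹)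
        (-(C₁ * deriv g a) / (1 + C₁ * g a) ^ 2 - -(C₂ * deriv g a) / (1 + C₂ * g a) ^ 2) a :=
      h1'.sub h2'
    rw [hFeq]
    convert h using 1
    have d1 := (hden₁ a).ne'
    have d2 := (hden₂ a).ne'
    field_simp
    ring
  have hds : ∀ a, deriv F a =
      deriv g a * ((C₂ - C₁) * (1 - C₁ * C₂ * g a ^ 2) /
        ((1 + C₁ * g a) ^ 2 * (1 + C₂ * g a) ^ 2)) := fun a => (key a).deriv
  set s := Real.sqrt (C₁ * C₂) with hs_def
  have hs0 : 0 < s := Real.sqrt_pos.2 (by positivity)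
  have hs2 : s ^ 2 = C₁ * C₂ := Real.sq_sqrt (by positivity)
  -- sign of N(a) := 1 - C₁C₂ g² characterizes g ≤ 1/s
  have hN : ∀ a, (0 ≤ 1 - C₁ * C₂ * g a ^ 2) ↔ g a ≤ 1 / s := by
    intro a
    have hga := hgpos a
    constructor
    · intro h
      rw [le_div_iff₀ hs0]
      nlinarith [sq_nonneg (g a * s - 1), mul_pos hga hs0]
    · intro h
      rw [le_div_iff₀ hs0] at h
      nlinarith [mul_pos hga hs0]
  have hD : ∀ a, (0:ℝ) < (1 + C₁ * g a) ^ 2 * (1 + C₂ * g a) ^ 2 := fun a =>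
    mul_pos (pow_pos (hden₁ a) 2) (pow_pos (hden₂ a) 2)
  have hiff : ∀ a, deriv F a ≤ 0 ↔ g a ≤ 1 / s := by
    intro a
    rw [hds a, ← hN a]
    constructor
    · intro h
      by_contra hneg
      push_neg at hneg
      have hNneg : (C₂ - C₁) * (1 - C₁ * C₂ * g a ^ 2) < 0 :=
        mul_neg_of_pos_of_neg (by linarith) hneg
      have : 0 < deriv g a * ((C₂ - C₁) * (1 - C₁ * C₂ * g a ^ 2) /
          ((1 + C₁ * g a) ^ 2 * (1 + C₂ * g a) ^ 2)) :=
        mul_pos_of_neg_of_neg (hg' a) (div_neg_of_neg_of_pos hNneg (hD a))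
      linarith
    · intro h
      exact mul_nonpos_of_nonpos_of_nonneg (le_of_lt (hg' a))
        (div_nonneg (mul_nonneg (by linarith) h) (le_of_lt (hD a)))
  have hiff' : ∀ a, 1 / s ≤ g a → 0 ≤ deriv F a := by
    intro a h
    have hNle : 1 - C₁ * C₂ * g a ^ 2 ≤ 0 := by
      by_contra hneg
      push_neg at hneg
      have := (hN a).1 (le_of_lt hneg)
      have hga := hgpos a
      rw [div_le_iff₀ hs0] at h
      rw [le_div_iff₀ hs0] at this
      nlinarith
    rw [hds a]
    have hq : (C₂ - C₁) * (1 - C₁ * C₂ * g a ^ 2) /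
        ((1 + C₁ * g a) ^ 2 * (1 + C₂ * g a) ^ 2) ≤ 0 :=
      div_nonpos_of_nonpos_of_nonneg
        (mul_nonpos_of_nonneg_of_nonpos (by linarith) hNle) (le_of_lt (hD a))
    nlinarith [mul_nonneg (neg_nonneg.2 (le_of_lt (hg' a))) (neg_nonneg.2 hq)]
  have gan : Antitone g := (strictAnti_of_deriv_neg hg').antitone
  have hFd : Differentiable ℝ F := fun a => (key a).differentiableAt
  refine ⟨hds, hiff, ?_, ?_⟩
  · have hconv : Convex ℝ {a : ℝ | g a ≤ 1 / s} := by
      rw [convex_iff_ordConnected]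
      exact ⟨fun x hx y hy z hz => le_trans (gan hz.1) (by exact hx)⟩
    exact antitoneOn_of_deriv_nonpos hconv hFd.continuous.continuousOn
      (fun x _ => (hFd x).differentiableWithinAt)
      (fun x hx => (hiff x).2 (interior_subset (s := {a : ℝ | g a ≤ 1 / s}) hx))
  · have hconv : Convex ℝ {a : ℝ | 1 / s ≤ g a} := by
      rw [convex_iff_ordConnected]
      exact ⟨fun x hx y hy z hz => le_trans (by exact hy) (gan hz.2)⟩
    exact monotoneOn_of_deriv_nonneg hconv hFd.continuous.continuousOn
      (fun x _ => (hFd x).differentiableWithinAt)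
      (fun x hx => hiff' x (interior_subset (s := {a : ℝ | 1 / s ≤ g a}) hx))
end

section
/- Let m ≥ 2 and let F be the m×m matrix whose first row is (a, b, …, b) and whose k-th row (2 ≤ k ≤ m) has entry e in column 1, entry c in column k, and entry d in every other column, where a + (m−1)b = 1, e + c + (m−2)d = 1 and e ≠ 0. Then the vector v ∈ ℝ^m with v₁ = −(m−1)b/e and v₂ = … = v_m = 1 satisfies F v = (a − e) v; i.e. v is an eigenvector of F with eigenvalue a − e. -/
/-- the vector `v` with `v₁ = −(m−1)b/e` and `v₂ = … = v_m = 1` is an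
eigenvector of the reduced Elite–Grassroots matrix `F` with eigenvalue `a − e`. -/
theorem elite_grassroots_second_eigenvector
    (m : ℕ) (hm : 2 ≤ m) (a b c d e : ℝ) (he : e ≠ 0)
    (hrow1 : a + ((m : ℝ) - 1) * b = 1)
    (hrow2 : e + c + ((m : ℝ) - 2) * d = 1)
    (F : Matrix (Fin m) (Fin m) ℝ)
    (hF : ∀ i j : Fin m, F i j =
      if (i : ℕ) = 0 then (if (j : ℕ) = 0 then a else b)
      else (if (j : ℕ) = 0 then e else if j = i then c else d))
    (v : Fin m → ℝ)
    (hv : ∀ i : Fin m, v i = if (i : ℕ) = 0 then -(((m : ℝ) - 1) * b / e) else 1) :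
    F.mulVec v = (a - e) • v := by
  have hm0 : 0 < m := by omega
  set z : Fin m := ⟨0, hm0⟩ with hz
  have hzv : (z : ℕ) = 0 := rfl
  have hm1 : ((m : ℝ) : ℝ) ≥ 2 := by exact_mod_cast hm
  funext i
  simp only [Matrix.mulVec, dotProduct, Pi.smul_apply, smul_eq_mul]
  by_cases hi : (i : ℕ) = 0
  · have hiz : i = z := Fin.ext hi
    subst hiz
    have key : ∀ j ∈ Finset.univ.erase z, F z j * v j = b := by
      intro j hj
      have hj' : (j : ℕ) ≠ 0 := fun h => (Finset.mem_erase.mp hj).1 (Fin.ext h)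
      simp [hF, hv, hj', hzv]
    rw [← Finset.add_sum_erase Finset.univ _ (Finset.mem_univ z),
        Finset.sum_congr rfl key, Finset.sum_const, nsmul_eq_mul]
    have hcard : (Finset.univ.erase z).card = m - 1 := by
      rw [Finset.card_erase_of_mem (Finset.mem_univ z), Finset.card_univ, Fintype.card_fin]
    rw [hcard]
    have hcast : ((m - 1 : ℕ) : ℝ) = (m : ℝ) - 1 := by
      have : (1 : ℕ) ≤ m := by omega
      push_cast [this]; ring
    rw [hcast]
    simp only [hF, hv, hzv, if_true]
    field_simp
    ring
  · have hiz : i ≠ z := fun h => hi (by rw [h])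
    have key : ∀ j ∈ (Finset.univ.erase z).erase i, F i j * v j = d := by
      intro j hj
      obtain ⟨hji, hj2⟩ := Finset.mem_erase.mp hj
      have hjz : (j : ℕ) ≠ 0 := fun h => (Finset.mem_erase.mp hj2).1 (Fin.ext h)
      simp [hF, hv, hi, hjz, hji]
    have hzmem : z ∈ Finset.univ.erase i := Finset.mem_erase.mpr ⟨hiz.symm, Finset.mem_univ z⟩
    have himem : i ∈ (Finset.univ.erase z) := Finset.mem_erase.mpr ⟨hiz, Finset.mem_univ i⟩
    rw [← Finset.add_sum_erase Finset.univ _ (Finset.mem_univ z),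
        ← Finset.add_sum_erase _ _ himem,
        Finset.sum_congr rfl key, Finset.sum_const, nsmul_eq_mul]
    have hcard : ((Finset.univ.erase z).erase i).card = m - 2 := by
      rw [Finset.card_erase_of_mem himem, Finset.card_erase_of_mem (Finset.mem_univ z),
        Finset.card_univ, Fintype.card_fin]
      omega
    rw [hcard]
    have hcast : ((m - 2 : ℕ) : ℝ) = (m : ℝ) - 2 := by
      push_cast [hm]; ring
    rw [hcast]
    simp only [hF, hv, hzv, hi, if_true, if_false, if_pos rfl]
    field_simp
    linear_combination hrow2 - hrow1
end
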